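/- arXiv:1406.0482 — 12 statements merged into one kernel-verified Lean document; each statement's English description precedes it below -/
import Mathlib

section
/- For any simple graph G on n vertices with minimum degree δ ≥ 1 and maximum degree Δ, Z(G) ≤ nΔ/(Δ+1). -/
/-- The set of vertices eventually colored by the zero forcing process started from `S`:
a vertex is forced if it is initially colored, or if some colored neighbor `v` has all its
other neighbors colored. -/
inductive SimpleGraph.Forced {V : Type*} (G : SimpleGraph V) (S : Set V) : V → Prop
  | init {v : V} : v ∈ S → G.Forced S v
  | force {v w : V} : G.Adj v w → G.Forced S v →
      (∀ u, G.Adj v u → u ≠ w → G.Forced S u) → G.Forced S w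

/-- `S` is a zero forcing set of `G` if the process colors every vertex. -/
def SimpleGraph.IsZeroForcingSet {V : Type*} (G : SimpleGraph V) (S : Set V) : Prop :=
  ∀ v, G.Forced S v

/-- The zero forcing number `Z(G)`: minimum size of a zero forcing set. -/
noncomputable def SimpleGraph.zeroForcingNumber {V : Type*} (G : SimpleGraph V) [Fintype V] : ℕ :=
  sInf {k | ∃ S : Finset V, G.IsZeroForcingSet ↑S ∧ S.card = k}

open Finset

/-- Monotonicity/transitivity of the forcing process. -/
private lemma forced_mono {V : Type*} (G : SimpleGraph V) {A B : Set V}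
    (h : ∀ a ∈ A, G.Forced B a) : ∀ {x : V}, G.Forced A x → G.Forced B x := by
  intro x hx
  induction hx with
  | init hv => exact h _ hv
  | force hadj _ _ ihv ihu => exact .force hadj ihv ihu

/-- Greedy construction: a dominating set whose complement is zero forcing. -/
private lemma exists_dom_forcing {V : Type*} [Fintype V] [DecidableEq V] (G : SimpleGraph V)
    [DecidableRel G.Adj] (hd : ∀ v : V, ∃ w, G.Adj v w) :
    ∃ T : Finset V, G.IsZeroForcingSet ↑(Tᶜ) ∧
      ∀ v : V, ∃ t ∈ T, v ∈ insert t (G.neighborFinset t) := by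
  suffices aux : ∀ k (T : Finset V),
      (univ \ T.biUnion (fun t => insert t (G.neighborFinset t))).card ≤ k →
      G.IsZeroForcingSet ↑(Tᶜ) →
      ∃ T' : Finset V, G.IsZeroForcingSet ↑(T'ᶜ) ∧
        ∀ v : V, ∃ t ∈ T', v ∈ insert t (G.neighborFinset t) by
    refine aux _ ∅ le_rfl ?_
    intro v; exact .init (by simp)
  intro k
  induction k with
  | zero =>
    intro T hcard hforce
    refine ⟨T, hforce, fun v => ?_⟩
    have : v ∈ T.biUnion (fun t => insert t (G.neighborFinset t)) := by
      by_contra hv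
      have : v ∈ univ \ T.biUnion (fun t => insert t (G.neighborFinset t)) :=
        mem_sdiff.mpr ⟨mem_univ v, hv⟩
      have := card_pos.mpr ⟨v, this⟩
      omega
    exact mem_biUnion.mp this
  | succ k ih =>
    intro T hcard hforce
    by_cases hfull : univ \ T.biUnion (fun t => insert t (G.neighborFinset t)) = ∅
    · refine ⟨T, hforce, fun v => ?_⟩
      have hsub := Finset.sdiff_eq_empty_iff_subset.mp hfull
      exact mem_biUnion.mp (hsub (mem_univ v))
    · obtain ⟨w, hw⟩ := Finset.nonempty_of_ne_empty hfull
      have hwNT : w ∉ T.biUnion (fun t => insert t (G.neighborFinset t)) := (mem_sdiff.mp hw).2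
      obtain ⟨v, hadj⟩ := hd w
      have hwT : w ∉ T := fun h => hwNT (mem_biUnion.mpr ⟨w, h, mem_insert_self _ _⟩)
      -- w's neighbors other than v are all outside T
      have hnbr : ∀ u, G.Adj w u → u ∉ T := by
        intro u hu huT
        exact hwNT (mem_biUnion.mpr ⟨u, huT, mem_insert_of_mem
          ((SimpleGraph.mem_neighborFinset G u w).mpr hu.symm)⟩)
      -- v is forced from the complement of insert v T
      have hforced_v : G.Forced ↑((insert v T)ᶜ) v := by
        refine SimpleGraph.Forced.force hadj (.init ?_) ?_
        · simp only [coe_compl, Set.mem_compl_iff, mem_coe, mem_insert, not_or]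
          exact ⟨hadj.ne, hwT⟩
        · intro u hu hne
          refine SimpleGraph.Forced.init ?_
          simp only [coe_compl, Set.mem_compl_iff, mem_coe, mem_insert, not_or]
          exact ⟨hne, hnbr u hu⟩
      have hforce2 : G.IsZeroForcingSet ↑((insert v T)ᶜ) := by
        intro x
        refine forced_mono G ?_ (hforce x)
        intro a ha
        by_cases hav : a = v
        · exact hav ▸ hforced_v
        · refine SimpleGraph.Forced.init ?_
          simp only [coe_compl, Set.mem_compl_iff, mem_coe, mem_insert, not_or] at ha ⊢
          exact ⟨hav, ha⟩
      -- the uncovered region strictly shrinks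
      have hss : univ \ (insert v T).biUnion (fun t => insert t (G.neighborFinset t)) ⊂
          univ \ T.biUnion (fun t => insert t (G.neighborFinset t)) := by
        refine Finset.ssubset_iff_of_subset (sdiff_subset_sdiff (Finset.Subset.refl _)
          (biUnion_subset_biUnion_of_subset_left _ (subset_insert v T))) |>.mpr ?_
        refine ⟨w, (mem_sdiff.mp hw |>.1 : w ∈ univ) |> fun h1 => mem_sdiff.mpr ⟨h1, ?_⟩, ?_⟩
        · exact hwNT
        · intro hmem
          have : w ∈ (insert v T).biUnion (fun t => insert t (G.neighborFinset t)) := by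
            refine mem_biUnion.mpr ⟨v, mem_insert_self _ _, mem_insert_of_mem ?_⟩
            exact (SimpleGraph.mem_neighborFinset G v w).mpr hadj.symm
          exact (mem_sdiff.mp hmem).2 this
      have hlt := Finset.card_lt_card hss
      exact ih (insert v T) (by omega) hforce2

/-- `Z(G) ≤ nΔ/(Δ+1)` when `δ ≥ 1`. -/
theorem zf_le_maxDegree_bound {V : Type*} [Fintype V] (G : SimpleGraph V) [DecidableRel G.Adj]
    (hδ : 1 ≤ G.minDegree) :
    (G.zeroForcingNumber : ℝ) ≤ (Fintype.card V : ℝ) * G.maxDegree / (G.maxDegree + 1) := by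
  classical
  have hdeg : ∀ v : V, ∃ w, G.Adj v w := by
    intro v
    have h1 : 1 ≤ G.degree v := hδ.trans (G.minDegree_le_degree v)
    obtain ⟨w, hw⟩ := Finset.card_pos.mp h1
    exact ⟨w, (SimpleGraph.mem_neighborFinset G v w).mp hw⟩
  obtain ⟨T, hforce, hdom⟩ := exists_dom_forcing G hdeg
  have hZ : G.zeroForcingNumber ≤ (Tᶜ).card := Nat.sInf_le ⟨Tᶜ, hforce, rfl⟩
  have hcover : Fintype.card V ≤ T.card * (G.maxDegree + 1) := by
    have hsub : (univ : Finset V) ⊆ T.biUnion (fun t => insert t (G.neighborFinset t)) := by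
      intro v _
      exact mem_biUnion.mpr (hdom v)
    calc Fintype.card V = (univ : Finset V).card := (card_univ).symm
      _ ≤ (T.biUnion (fun t => insert t (G.neighborFinset t))).card := card_le_card hsub
      _ ≤ ∑ t ∈ T, (insert t (G.neighborFinset t)).card := card_biUnion_le
      _ ≤ ∑ t ∈ T, (G.maxDegree + 1) := by
          refine sum_le_sum fun t _ => (card_insert_le _ _).trans ?_
          exact Nat.add_le_add_right (G.degree_le_maxDegree t) 1
      _ = T.card * (G.maxDegree + 1) := by rw [sum_const, smul_eq_mul]
  have hcompl : (Tᶜ).card = Fintype.card V - T.card := Finset.card_compl T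
  have htle : T.card ≤ Fintype.card V := Finset.card_le_univ T
  have h1 : (G.zeroForcingNumber : ℝ) + T.card ≤ Fintype.card V := by
    have : G.zeroForcingNumber + T.card ≤ Fintype.card V := by omega
    exact_mod_cast this
  have h2 : (Fintype.card V : ℝ) ≤ T.card * ((G.maxDegree : ℝ) + 1) := by
    have := hcover
    exact_mod_cast this
  have hpos : (0 : ℝ) < (G.maxDegree : ℝ) + 1 := by positivity
  rw [le_div_iff₀ hpos]
  nlinarith [mul_le_mul_of_nonneg_right h1 hpos.le, h2]
end

section
/- Let G be a triangle-free graph with minimum degree δ ≥ 3, let S be a minimum zero forcing set of G, and suppose v ∈ S forces w at the first time step (i.e., w is the unique neighbor of v not in S). Then w has at least one neighbor not in S. -/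
/-- in a triangle-free graph with `δ ≥ 3`, if `v` in a minimum zero forcing set `S`
forces `w` at time 1, then `w` has a neighbor outside `S`. -/
theorem forced_vertex_has_neighbor_outside {V : Type*} [Fintype V] (G : SimpleGraph V)
    [DecidableRel G.Adj] (htf : G.CliqueFree 3) (hδ : 3 ≤ G.minDegree)
    (S : Finset V) (hS : G.IsZeroForcingSet ↑S) (hmin : S.card = G.zeroForcingNumber)
    (v w : V) (hv : v ∈ S) (hw : w ∉ S) (hadj : G.Adj v w)
    (hforce : ∀ u, G.Adj v u → u ≠ w → u ∈ S) :
    ∃ z, G.Adj w z ∧ z ∉ S := by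
  classical
  by_contra hno
  push_neg at hno
  -- all neighbors of w are in S
  have hdegw : 3 ≤ G.degree w := le_trans hδ (G.minDegree_le_degree w)
  have hcard : 1 < (G.neighborFinset w).card := by
    rw [G.card_neighborFinset_eq_degree]; omega
  obtain ⟨u, hu, hune⟩ := Finset.exists_mem_ne hcard v
  rw [SimpleGraph.mem_neighborFinset] at hu
  have huS : u ∈ S := hno u hu
  -- triangle-freeness: u is not adjacent to v
  have hnvu : ¬ G.Adj v u := by
    intro hvu
    exact htf {v, w, u} (SimpleGraph.is3Clique_triple_iff.mpr ⟨hadj, hvu, hu⟩)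
  set S' : Finset V := S.erase u with hS'def
  have hvS'' : v ∈ S' := Finset.mem_erase.mpr ⟨hune.symm, hv⟩
  -- w is forced from S'
  have hFw : G.Forced (↑S' : Set V) w := by
    refine .force hadj (.init (by exact_mod_cast hvS'')) ?_
    intro x hx hxw
    refine .init ?_
    have hxS : x ∈ S := hforce x hx hxw
    have hxu : x ≠ u := fun h => hnvu (h ▸ hx)
    exact_mod_cast Finset.mem_erase.mpr ⟨hxu, hxS⟩
  -- u is forced from S'
  have hFu : G.Forced (↑S' : Set V) u := by
    refine .force hu hFw ?_
    intro x hx hxu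
    refine .init ?_
    exact_mod_cast Finset.mem_erase.mpr ⟨hxu, hno x hx⟩
  -- every vertex of S is forced from S'
  have hSforced : ∀ s ∈ (↑S : Set V), G.Forced (↑S' : Set V) s := by
    intro s hs
    by_cases h : s = u
    · exact h ▸ hFu
    · exact .init (by exact_mod_cast Finset.mem_erase.mpr ⟨h, by exact_mod_cast hs⟩)
  -- transitivity of forcing
  have htrans : ∀ x, G.Forced (↑S : Set V) x → G.Forced (↑S' : Set V) x := by
    intro x hx
    induction hx with
    | init hm => exact hSforced _ hm
    | force ha _ _ ihv ihall => exact .force ha ihv ihall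
  have hS' : G.IsZeroForcingSet (↑S' : Set V) := fun x => htrans x (hS x)
  have hle : G.zeroForcingNumber ≤ S'.card := Nat.sInf_le ⟨S', hS', rfl⟩
  have hcard' : S'.card = S.card - 1 := Finset.card_erase_of_mem huS
  have hpos : 1 ≤ S.card := Finset.card_pos.mpr ⟨u, huS⟩
  omega
end

section
/- If G is a triangle-free graph with minimum degree δ ≥ 3, then Z(G) ≥ δ + 1. -/
/-- If every vertex is reached by forcing from `S`, and `T ⊇ S` does not contain some forced
vertex, then there is a "boundary force": `a ∈ T` adjacent to `b ∉ T` with all other neighbors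
of `a` in `T`. -/
lemma forced_escape {V : Type*} (G : SimpleGraph V) (S T : Set V) (hST : S ⊆ T)
    {w : V} (hw : G.Forced S w) :
    w ∈ T ∨ ∃ a b, G.Adj a b ∧ a ∈ T ∧ b ∉ T ∧ ∀ u, G.Adj a u → u ≠ b → u ∈ T := by
  induction hw with
  | init h => exact Or.inl (hST h)
  | @force v w hadj hv hall ihv ihall =>
    rcases ihv with hvT | hex
    · by_cases hwT : w ∈ T
      · exact Or.inl hwT
      by_cases hallT : ∀ u, G.Adj v u → u ≠ w → u ∈ T
      · exact Or.inr ⟨v, w, hadj, hvT, hwT, hallT⟩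
      · push_neg at hallT
        obtain ⟨u, hu1, hu2, hu3⟩ := hallT
        rcases ihall u hu1 hu2 with h | h
        · exact absurd h hu3
        · exact Or.inr h
    · exact Or.inr hex

lemma zf_set_card {V : Type*} [Fintype V] (G : SimpleGraph V)
    [DecidableRel G.Adj] (htf : G.CliqueFree 3) (hδ : 3 ≤ G.minDegree)
    (S : Finset V) (hS : G.IsZeroForcingSet ↑S) : G.minDegree + 1 ≤ S.card := by
  classical
  by_contra hcard
  push_neg at hcard
  have hcard' : S.card ≤ G.minDegree := by omega
  -- V is nonempty
  have hne : Nonempty V := by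
    by_contra h
    rw [not_nonempty_iff] at h
    have : (Finset.univ : Finset V) = ∅ := Finset.univ_eq_empty
    simp [SimpleGraph.minDegree, this] at hδ
  obtain ⟨v0⟩ := hne
  -- |V| ≥ δ + 1
  have hVcard : G.minDegree + 1 ≤ Fintype.card V :=
    le_trans (by have := G.minDegree_le_degree v0; omega)
      (G.degree_lt_card_verts v0)
  -- triangle-free helper
  have notri : ∀ p q r, G.Adj p q → G.Adj p r → ¬ G.Adj q r := by
    intro p q r h1 h2 h3
    exact htf {p, q, r} (SimpleGraph.is3Clique_triple_iff.mpr ⟨h1, h2, h3⟩)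
  -- there is a vertex outside S
  have hSne : ∃ z, z ∉ S := by
    by_contra h
    push_neg at h
    have : S = Finset.univ := Finset.eq_univ_iff_forall.mpr h
    rw [this, Finset.card_univ] at hcard'
    omega
  obtain ⟨z, hz⟩ := hSne
  -- first force
  rcases forced_escape G ↑S ↑S le_rfl (hS z) with hzS | ⟨a, b, hab, haS, hbS, hall⟩
  · exact hz hzS
  simp only [Finset.coe_mem, Finset.mem_coe] at haS hbS hall
  have hbnb : b ∈ G.neighborFinset a := (G.mem_neighborFinset a b).mpr hab
  have hsub : insert a ((G.neighborFinset a).erase b) ⊆ S := by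
    intro u hu
    rcases Finset.mem_insert.mp hu with rfl | hu
    · exact haS
    · obtain ⟨hub, hunb⟩ := Finset.mem_erase.mp hu
      exact hall u ((G.mem_neighborFinset a u).mp hunb) hub
  have hanb : a ∉ (G.neighborFinset a).erase b := by
    intro h
    exact G.irrefl ((G.mem_neighborFinset a a).mp (Finset.mem_of_mem_erase h))
  have hcins : (insert a ((G.neighborFinset a).erase b)).card = G.degree a := by
    rw [Finset.card_insert_of_notMem hanb, Finset.card_erase_of_mem hbnb]
    have : 0 < (G.neighborFinset a).card := Finset.card_pos.mpr ⟨b, hbnb⟩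
    rw [SimpleGraph.degree]
    omega
  have hdega : G.minDegree ≤ G.degree a := G.minDegree_le_degree a
  have hle : G.degree a ≤ S.card := by
    calc G.degree a = _ := hcins.symm
    _ ≤ S.card := Finset.card_le_card hsub
  have hSeq : S = insert a ((G.neighborFinset a).erase b) :=
    (Finset.eq_of_subset_of_card_le hsub (by omega)).symm
  -- membership of S
  have hSmem : ∀ u, u ∈ S ↔ u = a ∨ (G.Adj a u ∧ u ≠ b) := by
    intro u
    rw [hSeq]
    simp only [Finset.mem_insert, Finset.mem_erase, SimpleGraph.mem_neighborFinset]
    tauto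
  -- the closed neighborhood of a
  set T : Finset V := insert a (G.neighborFinset a) with hT
  have hTmem : ∀ u, u ∈ T ↔ u = a ∨ G.Adj a u := by
    intro u; simp [hT]
  have hST : (↑S : Set V) ⊆ ↑T := by
    intro u hu
    simp only [Finset.mem_coe] at hu ⊢
    rcases (hSmem u).mp hu with rfl | ⟨h1, _⟩
    · exact (hTmem u).mpr (Or.inl rfl)
    · exact (hTmem u).mpr (Or.inr h1)
  -- degree bound helper: a vertex c adjacent to a with all its neighbors in {a, d} has deg ≤ 2
  have hdegsmall : ∀ c d : V, G.Adj a c → (∀ y, G.Adj c y → y = a ∨ y = d) → False := by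
    intro c d hac hy
    have hsub2 : G.neighborFinset c ⊆ {a, d} := by
      intro y hynb
      have := hy y ((G.mem_neighborFinset c y).mp hynb)
      simpa [Finset.mem_insert] using this
    have : G.degree c ≤ 2 := by
      calc G.degree c ≤ ({a, d} : Finset V).card := Finset.card_le_card hsub2
      _ ≤ 2 := Finset.card_insert_le _ _ |>.trans (by simp)
    have := G.minDegree_le_degree c
    omega
  by_cases hTall : ∀ u : V, u ∈ T
  · -- everything is in the closed neighborhood of a: b has degree ≤ 1
    refine hdegsmall b b hab ?_
    intro y hby
    rcases (hTmem y).mp (hTall y) with rfl | hay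
    · exact Or.inl rfl
    · exact absurd hby (notri a b y hab hay)
  · push_neg at hTall
    obtain ⟨w, hw⟩ := hTall
    rcases forced_escape G ↑S ↑T hST (hS w) with hwT | ⟨c, d, hcd, hcT, hdT, hall2⟩
    · exact hw hwT
    simp only [Finset.mem_coe] at hcT hdT hall2
    rcases (hTmem c).mp hcT with rfl | hac
    · exact hdT ((hTmem d).mpr (Or.inr hcd))
    · refine hdegsmall c d hac ?_
      intro y hcy
      by_cases hyd : y = d
      · exact Or.inr hyd
      · rcases (hTmem y).mp (hall2 y hcy hyd) with rfl | hay
        · exact Or.inl rfl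
        · exact absurd hcy (notri a c y hac hay)

/-- triangle-free with `δ ≥ 3` implies `Z(G) ≥ δ + 1`. -/
theorem zf_ge_minDegree_add_one {V : Type*} [Fintype V] (G : SimpleGraph V)
    [DecidableRel G.Adj] (htf : G.CliqueFree 3) (hδ : 3 ≤ G.minDegree) :
    G.minDegree + 1 ≤ G.zeroForcingNumber := by
  classical
  have hne : {k | ∃ S : Finset V, G.IsZeroForcingSet ↑S ∧ S.card = k}.Nonempty := by
    refine ⟨(Finset.univ : Finset V).card, Finset.univ, ?_, rfl⟩
    intro v
    exact SimpleGraph.Forced.init (by simp)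
  obtain ⟨S, hS, hcard⟩ := Nat.sInf_mem hne
  rw [SimpleGraph.zeroForcingNumber, ← hcard]
  exact zf_set_card G htf hδ S hS
end

section
/- Let S be a set of colored vertices of G and let B ⊆ S be a set of vertices all of whose neighbors are in S. Then S is a zero forcing set of G if and only if S \ B is a zero forcing set of the induced subgraph G[V \ B]. -/
/-- if every neighbor of every vertex of `B ⊆ S` lies in `S`, then `S` is a zero
forcing set of `G` iff `S \ B` is a zero forcing set of `G[V \ B]`. -/
theorem zf_set_iff_of_saturated {V : Type*} (G : SimpleGraph V) (S B : Set V)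
    (hBS : B ⊆ S) (hN : ∀ b ∈ B, ∀ u, G.Adj b u → u ∈ S) :
    G.IsZeroForcingSet S ↔
      (G.induce Bᶜ).IsZeroForcingSet (Subtype.val ⁻¹' (S \ B)) := by
  have key : ∀ x, G.Forced S x → ∀ hx : x ∈ Bᶜ,
      (G.induce Bᶜ).Forced (Subtype.val ⁻¹' (S \ B)) ⟨x, hx⟩ := by
    intro x hF
    induction hF with
    | @init x hx => intro hxB; exact .init ⟨hx, hxB⟩
    | @force v w hvw hv hforce ihv ihforce =>
      intro hwB
      by_cases hvB : v ∈ B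
      · exact .init ⟨hN v hvB w hvw, hwB⟩
      · refine .force (v := (⟨v, hvB⟩ : ↥Bᶜ)) (w := (⟨w, hwB⟩ : ↥Bᶜ)) hvw (ihv hvB) ?_
        rintro ⟨u, huB⟩ hadj hne
        exact ihforce u hadj (fun h => hne (by simp [h])) huB
  have key2 : ∀ y : ↥Bᶜ, (G.induce Bᶜ).Forced (Subtype.val ⁻¹' (S \ B)) y →
      G.Forced S y.1 := by
    intro y hF
    induction hF with
    | init hx => exact .init hx.1
    | @force v w hvw hv hforce ihv ihforce =>
      refine .force (v := v.1) (w := w.1) hvw ihv ?_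
      intro u hadj hne
      by_cases huB : u ∈ B
      · exact .init (hBS huB)
      · exact ihforce ⟨u, huB⟩ hadj (fun h => hne (congrArg Subtype.val h))
  constructor
  · intro h y
    exact key y.1 (h y.1) y.2
  · intro h v
    by_cases hvB : v ∈ B
    · exact .init (hBS hvB)
    · exact key2 ⟨v, hvB⟩ (h ⟨v, hvB⟩)
end

section
/- If G is a graph on n vertices with girth g (i.e., G contains a cycle, and its shortest cycle has length g), then Z(G) ≤ n − g + 2. -/
namespace ZFAux

open SimpleGraph Walk

variable {V : Type*} {G : SimpleGraph V}

/-- A segment of a walk from index `i` to index `j`. -/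
lemma exists_segment {x y : V} (p : G.Walk x y) :
    ∀ i j : ℕ, i ≤ j → j ≤ p.length →
      ∃ q : G.Walk (p.getVert i) (p.getVert j),
        q.length = j - i ∧ q.support.Sublist p.support := by
  induction p with
  | nil =>
    intro i j hij hj
    simp only [Walk.length_nil, Nat.le_zero] at hj
    subst hj
    simp only [Nat.le_zero] at hij
    subst hij
    exact ⟨Walk.nil, by simp, by simp⟩
  | @cons u v z h q ih =>
    intro i j hij hj
    match i, j with
    | 0, 0 =>
      exact ⟨Walk.nil, by simp, by simp [Walk.support_cons]⟩
    | 0, (j+1) =>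
      obtain ⟨r, hr1, hr2⟩ := ih 0 j (Nat.zero_le _)
        (by simpa [Nat.succ_le_succ_iff] using hj)
      refine ⟨Walk.cons h (r.copy (Walk.getVert_zero _) rfl), ?_, ?_⟩
      · show (r.copy _ _).length + 1 = j + 1
        simp [hr1]
      · simp only [Walk.support_cons, Walk.support_copy]
        exact List.Sublist.cons₂ _ (by convert hr2 using 1; exact Walk.support_copy _ _ _)
    | (i+1), (j+1) =>
      obtain ⟨r, hr1, hr2⟩ := ih i j (by omega)
        (by simpa [Nat.succ_le_succ_iff] using hj)
      refine ⟨r, by simpa using hr1, ?_⟩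
      simp only [Walk.support_cons]
      exact hr2.trans (List.sublist_cons_self _ _)

/-- In a path, an edge between the endpoints cannot appear among the edges
unless the path has length 1. -/
lemma edge_not_mem_of_isPath {x y : V} (q : G.Walk x y) (hq : q.IsPath)
    (hlen : 2 ≤ q.length) : s(y, x) ∉ q.edges := by
  intro he
  induction q with
  | nil => simp at he
  | @cons u v z h r ih =>
    rw [Walk.edges_cons, List.mem_cons] at he
    rw [Walk.cons_isPath_iff] at hq
    rcases he with he | he
    · rw [Sym2.eq_iff] at he
      rcases he with ⟨hz, hx⟩ | ⟨h1, _⟩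
      · exact h.ne hx
      · subst h1
        have hrnil := (SimpleGraph.Walk.isPath_iff_eq_nil (p := r)).mp hq.1
        subst hrnil
        simp at hlen
    · exact hq.2 (Walk.snd_mem_support_of_mem_edges r he)

/-- A chord in a path yields a short cycle: bound on the extended girth. -/
lemma egirth_le_chord {x y : V} (p : G.Walk x y) (hp : p.IsPath) (i j : ℕ)
    (h2 : i + 2 ≤ j) (hj : j ≤ p.length)
    (hadj : G.Adj (p.getVert i) (p.getVert j)) :
    G.egirth ≤ (j - i + 1 : ℕ) := by
  obtain ⟨q, hq1, hq2⟩ := exists_segment p i j (by omega) hj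
  have hqpath : q.IsPath := by
    rw [Walk.isPath_def]
    exact hq2.nodup (Walk.isPath_def _ |>.mp hp)
  have hqlen : 2 ≤ q.length := by omega
  have hne : s(p.getVert j, p.getVert i) ∉ q.edges :=
    edge_not_mem_of_isPath q hqpath hqlen
  have hcyc : (Walk.cons hadj.symm q).IsCycle := by
    rw [SimpleGraph.Walk.cons_isCycle_iff]
    exact ⟨hqpath, hne⟩
  have := SimpleGraph.le_egirth.mp (le_refl G.egirth) _ (Walk.cons hadj.symm q) hcyc
  calc G.egirth ≤ ((Walk.cons hadj.symm q).length : ℕ∞) := this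
    _ = ((j - i + 1 : ℕ) : ℕ∞) := by
        rw [Walk.length_cons, hq1]

end ZFAux

/-- `Z(G) ≤ n − g + 2` for a graph with a cycle and girth `g`. -/
theorem zf_le_card_sub_girth_add_two {V : Type*} [Fintype V] (G : SimpleGraph V)
    (hcyc : ¬ G.IsAcyclic) (g : ℕ) (hg : G.girth = g) :
    G.zeroForcingNumber ≤ Fintype.card V - g + 2 := by
  classical
  obtain ⟨a, w, hwc, hwg⟩ := SimpleGraph.exists_girth_eq_length.mpr hcyc
  have hglen : w.length = g := by rw [← hwg, hg]
  have hg3 : 3 ≤ g := hg ▸ SimpleGraph.three_le_girth hcyc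
  have hegirth : G.egirth = (g : ℕ∞) := by
    have hne : G.egirth ≠ ⊤ := SimpleGraph.egirth_eq_top.not.mpr hcyc
    rw [← ENat.coe_toNat hne]
    exact_mod_cast congrArg (Nat.cast : ℕ → ℕ∞) (hg ▸ rfl : G.egirth.toNat = g)
  cases w with
  | nil => exact absurd hwc (by simp [SimpleGraph.Walk.isCycle_def])
  | @cons _ b _ hab p =>
    rw [SimpleGraph.Walk.cons_isCycle_iff] at hwc
    obtain ⟨hppath, _⟩ := hwc
    have hplen : p.length = g - 1 := by
      simp only [SimpleGraph.Walk.length_cons] at hglen; omega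
    -- the colored set
    set T : Finset V := p.support.toFinset \ {a, b} with hT
    set S : Finset V := Finset.univ \ T with hS
    have hmemS : ∀ v : V, v ∈ S ↔ (v ∉ p.support ∨ v = a ∨ v = b) := by
      intro v
      simp only [hS, hT, Finset.mem_sdiff, Finset.mem_univ, true_and,
        List.mem_toFinset, Finset.mem_insert, Finset.mem_singleton]
      tauto
    -- forcing
    have key : ∀ i, i ≤ p.length → G.Forced ↑S (p.getVert i) := by
      intro i
      induction i using Nat.strong_induction_on with
      | _ i IH =>
        intro hi
        match i with
        | 0 =>
          refine SimpleGraph.Forced.init ?_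
          rw [Finset.mem_coe, hmemS]
          right; right
          exact (SimpleGraph.Walk.getVert_zero p).symm ▸ rfl
        | (k+1) =>
          have hadjk : G.Adj (p.getVert k) (p.getVert (k+1)) :=
            SimpleGraph.Walk.adj_getVert_succ p (by omega)
          refine SimpleGraph.Forced.force hadjk (IH k (by omega) (by omega)) ?_
          intro u hu hne
          by_cases hus : u ∈ S
          · exact SimpleGraph.Forced.init hus
          · -- u is an uncolored vertex of the path
            have husup : u ∈ p.support ∧ u ≠ a ∧ u ≠ b := by
              have := (hmemS u).not.mp hus
              push_neg at this
              tauto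
            obtain ⟨m, hm, hmle⟩ :=
              SimpleGraph.Walk.mem_support_iff_exists_getVert.mp husup.1
            rcases lt_or_ge k m with hkm | hkm
            · -- m ≥ k+1; m = k+1 contradicts hne; m ≥ k+2 gives a chord
              have hm1 : m ≠ k + 1 := by
                intro hmk; exact hne (hmk ▸ hm).symm
              have hmlen : m < p.length := by
                rcases eq_or_lt_of_le hmle with h | h
                · exfalso
                  apply husup.2.1
                  rw [← hm, h, SimpleGraph.Walk.getVert_length]
                · exact h
              have hchord : G.Adj (p.getVert k) (p.getVert m) := hm ▸ hu
              have := ZFAux.egirth_le_chord p hppath k m (by omega) (by omega) hchord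
              rw [hegirth, Nat.cast_le] at this
              omega
            · -- m ≤ k : already forced
              exact hm ▸ IH m (by omega) (by omega)
    have hZF : G.IsZeroForcingSet ↑S := by
      intro v
      by_cases hv : v ∈ p.support
      · obtain ⟨m, hm, hmle⟩ := SimpleGraph.Walk.mem_support_iff_exists_getVert.mp hv
        exact hm ▸ key m hmle
      · exact SimpleGraph.Forced.init (by rw [Finset.mem_coe, hmemS]; left; exact hv)
    -- cardinality
    have hsupcard : p.support.toFinset.card = g := by
      rw [List.toFinset_card_of_nodup (SimpleGraph.Walk.isPath_def p |>.mp hppath)]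
      rw [SimpleGraph.Walk.length_support]
      omega
    have habmem : ({a, b} : Finset V) ⊆ p.support.toFinset := by
      intro x hx
      simp only [Finset.mem_insert, Finset.mem_singleton] at hx
      rw [List.mem_toFinset]
      rcases hx with rfl | rfl
      · exact SimpleGraph.Walk.end_mem_support p
      · exact SimpleGraph.Walk.start_mem_support p
    have hab' : a ≠ b := hab.ne
    have hTcard : T.card = g - 2 := by
      rw [hT, Finset.card_sdiff_of_subset habmem, hsupcard,
        Finset.card_insert_of_notMem (by simp [hab']), Finset.card_singleton]
    have hgn : g ≤ Fintype.card V := by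
      rw [← hsupcard]
      exact Finset.card_le_card (Finset.subset_univ _) |>.trans le_rfl
        |>.trans (le_of_eq (Finset.card_univ))
    have hScard : S.card = Fintype.card V - g + 2 := by
      rw [hS, Finset.card_sdiff_of_subset (Finset.subset_univ T), hTcard, Finset.card_univ]
      omega
    have : G.zeroForcingNumber ≤ S.card :=
      Nat.sInf_le ⟨S, hZF, rfl⟩
    omega
end

section
/- Let G be a triangle-free graph with minimum degree δ ≥ 2 such that every minimum zero forcing set contains two adjacent vertices that both force at time t = 1. Then Z(G) ≥ 2δ − 2. -/
/-- triangle-free, `δ ≥ 2`, and every minimum zero forcing set has two adjacent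
vertices each with exactly one uncolored neighbor (both force at time 1); then `Z(G) ≥ 2δ − 2`. -/
theorem zf_ge_two_minDegree_sub_two_of_two_forcers {V : Type*} [Fintype V] (G : SimpleGraph V)
    [DecidableRel G.Adj] (htf : G.CliqueFree 3) (hδ : 2 ≤ G.minDegree)
    (hyp : ∀ S : Finset V, G.IsZeroForcingSet ↑S → S.card = G.zeroForcingNumber →
      ∃ v ∈ S, ∃ w ∈ S, G.Adj v w ∧ (∃! u, G.Adj v u ∧ u ∉ S) ∧ (∃! u, G.Adj w u ∧ u ∉ S)) :
    2 * G.minDegree - 2 ≤ G.zeroForcingNumber := by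
  classical
  have hmem : G.zeroForcingNumber ∈ {k | ∃ S : Finset V, G.IsZeroForcingSet ↑S ∧ S.card = k} := by
    apply Nat.sInf_mem
    exact ⟨(Finset.univ : Finset V).card, Finset.univ, fun v => .init (by simp), rfl⟩
  obtain ⟨S, hS, hcard⟩ := hmem
  obtain ⟨v, hv, w, hw, hadj, ⟨uv, huv, huv'⟩, ⟨uw, huw, huw'⟩⟩ := hyp S hS hcard
  set A := G.neighborFinset v ∩ S with hA
  set B := G.neighborFinset w ∩ S with hB
  have hdisj : Disjoint A B := by
    rw [Finset.disjoint_left]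
    intro x hxA hxB
    simp only [hA, hB, Finset.mem_inter, SimpleGraph.mem_neighborFinset] at hxA hxB
    exact htf {v, w, x} (SimpleGraph.is3Clique_triple_iff.2 ⟨hadj, hxA.1, hxB.1⟩)
  have hcv : G.degree v ≤ A.card + 1 := by
    have hsub : G.neighborFinset v \ S ⊆ {uv} := by
      intro x hx
      simp only [Finset.mem_sdiff, SimpleGraph.mem_neighborFinset] at hx
      simp [huv' x ⟨hx.1, hx.2⟩]
    have h1 : (G.neighborFinset v \ S).card ≤ 1 := by
      simpa using Finset.card_le_card hsub
    have := Finset.card_sdiff_add_card_inter (G.neighborFinset v) S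
    rw [SimpleGraph.card_neighborFinset_eq_degree, ← hA] at this
    omega
  have hcw : G.degree w ≤ B.card + 1 := by
    have hsub : G.neighborFinset w \ S ⊆ {uw} := by
      intro x hx
      simp only [Finset.mem_sdiff, SimpleGraph.mem_neighborFinset] at hx
      simp [huw' x ⟨hx.1, hx.2⟩]
    have h1 : (G.neighborFinset w \ S).card ≤ 1 := by
      simpa using Finset.card_le_card hsub
    have := Finset.card_sdiff_add_card_inter (G.neighborFinset w) S
    rw [SimpleGraph.card_neighborFinset_eq_degree, ← hB] at this
    omega
  have hunion : A.card + B.card ≤ S.card := by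
    rw [← Finset.card_union_of_disjoint hdisj]
    apply Finset.card_le_card
    intro x hx
    rcases Finset.mem_union.1 hx with h | h
    · exact (Finset.mem_inter.1 h).2
    · exact (Finset.mem_inter.1 h).2
  have hdv := G.minDegree_le_degree v
  have hdw := G.minDegree_le_degree w
  omega
end

section
/- If G is a graph with girth g ≥ 5 and minimum degree δ ≥ 2, then Z(G) ≥ 2δ − 2. -/
namespace ZFProofAux

open Finset

variable {V : Type*} {G : SimpleGraph V}

lemma no_triangle' (hg : 5 ≤ G.egirth) {a b c : V} (hab : G.Adj a b) (hbc : G.Adj b c)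
    (hca : G.Adj c a) : False := by
  have hcyc : (SimpleGraph.Walk.cons hab (SimpleGraph.Walk.cons hbc
      (SimpleGraph.Walk.cons hca SimpleGraph.Walk.nil))).IsCycle := by
    simp [SimpleGraph.Walk.isCycle_def, SimpleGraph.Walk.isTrail_def, hab.ne, hbc.ne, hca.ne,
      hca.ne', hab.ne', hbc.ne', List.nodup_cons, Sym2.eq_iff]
  have := SimpleGraph.le_egirth.mp hg _ _ hcyc
  simp only [SimpleGraph.Walk.length_cons, SimpleGraph.Walk.length_nil] at this
  norm_num at this

lemma no_c4' (hg : 5 ≤ G.egirth) {a b c d : V} (hab : a ≠ b) (hcd : c ≠ d) (hac : G.Adj a c)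
    (hcb : G.Adj c b) (hbd : G.Adj b d) (hda : G.Adj d a) : False := by
  have hcyc : (SimpleGraph.Walk.cons hac (SimpleGraph.Walk.cons hcb (SimpleGraph.Walk.cons hbd
      (SimpleGraph.Walk.cons hda SimpleGraph.Walk.nil)))).IsCycle := by
    simp [SimpleGraph.Walk.isCycle_def, SimpleGraph.Walk.isTrail_def, hac.ne, hcb.ne, hbd.ne,
      hda.ne, hac.ne', hcb.ne', hbd.ne', hda.ne', hab, hab.symm, hcd, hcd.symm,
      List.nodup_cons, Sym2.eq_iff]
  have := SimpleGraph.le_egirth.mp hg _ _ hcyc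
  simp only [SimpleGraph.Walk.length_cons, SimpleGraph.Walk.length_nil] at this
  norm_num at this

lemma forced_rec {S T : Set V} (hST : S ⊆ T) {w : V} (h : G.Forced S w) :
    w ∈ T ∨ ∃ v x, G.Adj v x ∧ x ∉ T ∧ v ∈ T ∧ ∀ u, G.Adj v u → u ≠ x → u ∈ T := by
  induction h with
  | init h => exact Or.inl (hST h)
  | @force v w hadj hv hall ihv ihall =>
    by_cases hw : w ∈ T
    · exact Or.inl hw
    · rcases ihv with hvT | hex
      · by_cases hA : ∀ u, G.Adj v u → u ≠ w → u ∈ T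
        · exact Or.inr ⟨v, w, hadj, hw, hvT, hA⟩
        · push_neg at hA
          obtain ⟨u, h1, h2, h3⟩ := hA
          rcases ihall u h1 h2 with h | h
          · exact absurd h h3
          · exact Or.inr h
      · exact Or.inr hex

lemma finish [DecidableEq V] {D B S : Finset V} {δ : ℕ} (hD : D ⊆ S) (hB : B ⊆ S)
    (hdisj : Disjoint D B) (hDc : δ ≤ D.card) (hBc : δ - 2 ≤ B.card) :
    2 * δ - 2 ≤ S.card := by
  have := Finset.card_le_card (Finset.union_subset hD hB)
  rw [Finset.card_union_of_disjoint hdisj] at this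
  omega

lemma key {V : Type*} [Fintype V] (G : SimpleGraph V) [DecidableRel G.Adj]
    (hg : 5 ≤ G.egirth) (hδ : 2 ≤ G.minDegree) (S : Finset V)
    (hS : G.IsZeroForcingSet ↑S) : 2 * G.minDegree - 2 ≤ S.card := by
  classical
  have hne : Nonempty V := by
    by_contra h
    rw [not_nonempty_iff] at h
    have h0 : G.minDegree = 0 := by simp [SimpleGraph.minDegree]
    omega
  have hn : 2 * G.minDegree ≤ Fintype.card V := by
    obtain ⟨u⟩ := hne
    have hdu : G.minDegree ≤ G.degree u := G.minDegree_le_degree u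
    have hpos : 0 < (G.neighborFinset u).card := by
      rw [SimpleGraph.card_neighborFinset_eq_degree]; omega
    obtain ⟨v, hv⟩ := Finset.card_pos.mp hpos
    rw [SimpleGraph.mem_neighborFinset] at hv
    have hdv : G.minDegree ≤ G.degree v := G.minDegree_le_degree v
    have hdisj : Disjoint (G.neighborFinset u) (G.neighborFinset v) := by
      rw [Finset.disjoint_left]
      intro y hyu hyv
      rw [SimpleGraph.mem_neighborFinset] at hyu hyv
      exact no_triangle' hg hv hyv hyu.symm
    have hcard := Finset.card_le_univ (G.neighborFinset u ∪ G.neighborFinset v)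
    rw [Finset.card_union_of_disjoint hdisj, SimpleGraph.card_neighborFinset_eq_degree,
      SimpleGraph.card_neighborFinset_eq_degree] at hcard
    omega
  by_cases hall : ∀ w : V, w ∈ S
  · have hSu : S = Finset.univ := Finset.eq_univ_iff_forall.mpr hall
    rw [hSu, Finset.card_univ]
    omega
  push_neg at hall
  obtain ⟨w₀, hw₀⟩ := hall
  rcases forced_rec (le_refl (↑S : Set V)) (hS w₀) with h | ⟨u₁, a, hadj₁, haS, hu₁S, hN₁⟩
  · exact absurd (Finset.mem_coe.mp h) hw₀
  rw [Finset.mem_coe] at hu₁S haS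
  have hN₁' : ∀ u, G.Adj u₁ u → u ≠ a → u ∈ S := fun u h1 h2 => Finset.mem_coe.mp (hN₁ u h1 h2)
  -- the first colored set D
  set D : Finset V := insert u₁ (G.neighborFinset u₁ \ {a}) with hDdef
  have hu₁nmem : u₁ ∉ G.neighborFinset u₁ \ {a} := by
    simp [SimpleGraph.mem_neighborFinset]
  have hDsub : D ⊆ S := by
    intro y hy
    rw [hDdef, Finset.mem_insert] at hy
    rcases hy with rfl | hy
    · exact hu₁S
    · rw [Finset.mem_sdiff, SimpleGraph.mem_neighborFinset, Finset.mem_singleton] at hy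
      exact hN₁' y hy.1 hy.2
  have hDcard : G.minDegree ≤ D.card := by
    have hsub : ({a} : Finset V) ⊆ G.neighborFinset u₁ := by
      simp [SimpleGraph.mem_neighborFinset, hadj₁]
    have h1 : D.card = (G.neighborFinset u₁ \ {a}).card + 1 :=
      Finset.card_insert_of_notMem hu₁nmem
    have h2 : (G.neighborFinset u₁ \ {a}).card = G.degree u₁ - 1 := by
      rw [Finset.card_sdiff_of_subset hsub, Finset.card_singleton, SimpleGraph.card_neighborFinset_eq_degree]
    have h3 : G.minDegree ≤ G.degree u₁ := G.minDegree_le_degree u₁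
    have h4 : 2 ≤ G.degree u₁ := le_trans hδ h3
    omega
  -- second stage
  by_cases hall2 : ∀ w : V, w ∈ insert a S
  · have hSu : insert a S = Finset.univ := Finset.eq_univ_iff_forall.mpr hall2
    have h1 : Fintype.card V ≤ S.card + 1 := by
      rw [← Finset.card_univ, ← hSu]
      exact Finset.card_insert_le _ _
    omega
  push_neg at hall2
  obtain ⟨w₁, hw₁⟩ := hall2
  have hsub2 : (↑S : Set V) ⊆ ↑(insert a S) := by
    intro y hy
    simp only [Finset.coe_insert, Set.mem_insert_iff, Finset.mem_coe] at *
    exact Or.inr hy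
  rcases forced_rec hsub2 (hS w₁) with h | ⟨x, b, hadj₂, hbT, hxT, hN₂⟩
  · exact absurd (Finset.mem_coe.mp h) hw₁
  simp only [Finset.coe_insert, Set.mem_insert_iff, Finset.mem_coe] at hbT hxT hN₂
  push_neg at hbT
  obtain ⟨hba, hbS⟩ := hbT
  -- x ≠ u₁
  have hxu₁ : x ≠ u₁ := by
    rintro rfl
    exact hbS (hN₁' b hadj₂ hba)
  rcases hxT with rfl | hxS
  · -- Case 1 : the second forcer is a
    set B : Finset V := G.neighborFinset x \ {u₁, b} with hBdef
    have hBsub : B ⊆ S := by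
      intro y hy
      rw [hBdef, Finset.mem_sdiff, SimpleGraph.mem_neighborFinset, Finset.mem_insert,
        Finset.mem_singleton] at hy
      push_neg at hy
      obtain ⟨hxy, hyu₁, hyb⟩ := hy
      rcases hN₂ y hxy hyb with rfl | h
      · exact absurd hxy (G.irrefl)
      · exact h
    have hdisj : Disjoint D B := by
      rw [Finset.disjoint_left]
      intro y hyD hyB
      rw [hBdef, Finset.mem_sdiff, SimpleGraph.mem_neighborFinset, Finset.mem_insert,
        Finset.mem_singleton] at hyB
      push_neg at hyB
      obtain ⟨hxy, hyu₁, hyb⟩ := hyB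
      rw [hDdef, Finset.mem_insert, Finset.mem_sdiff, SimpleGraph.mem_neighborFinset] at hyD
      rcases hyD with rfl | ⟨hu₁y, _⟩
      · exact hyu₁ rfl
      · exact no_triangle' hg hadj₁ hxy hu₁y.symm
    have hBcard : G.minDegree - 2 ≤ B.card := by
      have h1 := Finset.le_card_sdiff ({u₁, b} : Finset V) (G.neighborFinset x)
      rw [← hBdef] at h1
      have h2 : ({u₁, b} : Finset V).card ≤ 2 := Finset.card_le_two
      have h3 : G.minDegree ≤ G.degree x := G.minDegree_le_degree x
      rw [SimpleGraph.card_neighborFinset_eq_degree] at h1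
      omega
    exact finish hDsub hBsub hdisj hDcard hBcard
  by_cases hxu : G.Adj u₁ x
  · -- Case 2 : second forcer adjacent to u₁
    set B : Finset V := G.neighborFinset x \ {b, u₁} with hBdef
    have hBsub : B ⊆ S := by
      intro y hy
      rw [hBdef, Finset.mem_sdiff, SimpleGraph.mem_neighborFinset, Finset.mem_insert,
        Finset.mem_singleton] at hy
      push_neg at hy
      obtain ⟨hxy, hyb, hyu₁⟩ := hy
      rcases hN₂ y hxy hyb with rfl | h
      · exact absurd (no_triangle' hg hxu hxy hadj₁.symm) not_false
      · exact h
    have hdisj : Disjoint D B := by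
      rw [Finset.disjoint_left]
      intro y hyD hyB
      rw [hBdef, Finset.mem_sdiff, SimpleGraph.mem_neighborFinset, Finset.mem_insert,
        Finset.mem_singleton] at hyB
      push_neg at hyB
      obtain ⟨hxy, hyb, hyu₁⟩ := hyB
      rw [hDdef, Finset.mem_insert, Finset.mem_sdiff, SimpleGraph.mem_neighborFinset] at hyD
      rcases hyD with rfl | ⟨hu₁y, _⟩
      · exact hyu₁ rfl
      · exact no_triangle' hg hxu hxy hu₁y.symm
    have hBcard : G.minDegree - 2 ≤ B.card := by
      have h1 := Finset.le_card_sdiff ({b, u₁} : Finset V) (G.neighborFinset x)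
      rw [← hBdef] at h1
      have h2 : ({b, u₁} : Finset V).card ≤ 2 := Finset.card_le_two
      have h3 : G.minDegree ≤ G.degree x := G.minDegree_le_degree x
      rw [SimpleGraph.card_neighborFinset_eq_degree] at h1
      omega
    exact finish hDsub hBsub hdisj hDcard hBcard
  · -- Case 3 : second forcer not adjacent to u₁ and distinct from a
    set I : Finset V := G.neighborFinset x ∩ G.neighborFinset u₁ with hIdef
    have hI : I.card ≤ 1 := by
      rw [Finset.card_le_one]
      intro c hc d hd
      by_contra hne'
      rw [hIdef, Finset.mem_inter, SimpleGraph.mem_neighborFinset,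
        SimpleGraph.mem_neighborFinset] at hc hd
      exact no_c4' hg hxu₁ hne' hc.1 hc.2.symm hd.2 hd.1.symm
    set K : Finset V := insert b (insert a I) with hKdef
    have hK : K.card ≤ 3 := by
      calc K.card ≤ (insert a I).card + 1 := Finset.card_insert_le _ _
        _ ≤ I.card + 1 + 1 := by
            have := Finset.card_insert_le a I
            omega
        _ ≤ 3 := by omega
    set B : Finset V := insert x (G.neighborFinset x \ K) with hBdef
    have hxnmem : x ∉ G.neighborFinset x \ K := by
      simp [SimpleGraph.mem_neighborFinset]
    have hBsub : B ⊆ S := by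
      intro y hy
      rw [hBdef, Finset.mem_insert] at hy
      rcases hy with rfl | hy
      · exact hxS
      · rw [Finset.mem_sdiff, SimpleGraph.mem_neighborFinset, hKdef, Finset.mem_insert,
          Finset.mem_insert] at hy
        push_neg at hy
        obtain ⟨hxy, hyb, hya, hyI⟩ := hy
        rcases hN₂ y hxy hyb with rfl | h
        · exact absurd rfl hya
        · exact h
    have hdisj : Disjoint D B := by
      rw [Finset.disjoint_left]
      intro y hyD hyB
      rw [hDdef, Finset.mem_insert, Finset.mem_sdiff, SimpleGraph.mem_neighborFinset] at hyD
      rw [hBdef, Finset.mem_insert, Finset.mem_sdiff, SimpleGraph.mem_neighborFinset, hKdef,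
        Finset.mem_insert, Finset.mem_insert] at hyB
      rcases hyB with rfl | hyB
      · rcases hyD with rfl | ⟨hu₁y, _⟩
        · exact hxu₁ rfl
        · exact hxu hu₁y
      · push_neg at hyB
        obtain ⟨hxy, hyb, hya, hyI⟩ := hyB
        rcases hyD with rfl | ⟨hu₁y, _⟩
        · exact hxu hxy.symm
        · exact hyI (by rw [hIdef, Finset.mem_inter, SimpleGraph.mem_neighborFinset,
            SimpleGraph.mem_neighborFinset]; exact ⟨hxy, hu₁y⟩)
    have hBcard : G.minDegree - 2 ≤ B.card := by
      have h1 := Finset.le_card_sdiff K (G.neighborFinset x)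
      have h3 : G.minDegree ≤ G.degree x := G.minDegree_le_degree x
      rw [SimpleGraph.card_neighborFinset_eq_degree] at h1
      have h4 : B.card = (G.neighborFinset x \ K).card + 1 :=
        Finset.card_insert_of_notMem hxnmem
      omega
    exact finish hDsub hBsub hdisj hDcard hBcard

end ZFProofAux

/-- girth at least 5 and `δ ≥ 2` imply `Z(G) ≥ 2δ − 2`. -/
theorem zf_ge_two_minDegree_sub_two {V : Type*} [Fintype V] (G : SimpleGraph V)
    [DecidableRel G.Adj] (hg : 5 ≤ G.egirth) (hδ : 2 ≤ G.minDegree) :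
    2 * G.minDegree - 2 ≤ G.zeroForcingNumber := by
  classical
  apply le_csInf
  · exact ⟨(Finset.univ : Finset V).card, Finset.univ,
      fun v => SimpleGraph.Forced.init (by simp), rfl⟩
  · rintro b ⟨S, hS, rfl⟩
    exact ZFProofAux.key G hg hδ S hS
end

section
/- For any graph G on n ≥ 2 vertices and any vertex v of G, Z(G) − 1 ≤ Z(G − v) ≤ Z(G) + 1. -/
namespace ZFAux

variable {V : Type*}

/-- The set of vertices colored at time `n` in the (maximal simultaneous) forcing process. -/
def colorSeq (G : SimpleGraph V) (S : Set V) : ℕ → Set V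
  | 0 => S
  | n + 1 => colorSeq G S n ∪ {x | ∃ u, u ∈ colorSeq G S n ∧ G.Adj u x ∧
      ∀ y, G.Adj u y → y ≠ x → y ∈ colorSeq G S n}

lemma colorSeq_succ (G : SimpleGraph V) (S : Set V) (n : ℕ) :
    colorSeq G S (n + 1) = colorSeq G S n ∪ {x | ∃ u, u ∈ colorSeq G S n ∧ G.Adj u x ∧
      ∀ y, G.Adj u y → y ≠ x → y ∈ colorSeq G S n} := rfl

lemma colorSeq_mono (G : SimpleGraph V) (S : Set V) {m n : ℕ} (h : m ≤ n) :
    colorSeq G S m ⊆ colorSeq G S n := by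
  induction n with
  | zero => simp_all
  | succ n ih =>
    rcases Nat.lt_or_ge m (n + 1) with h' | h'
    · exact (ih (Nat.lt_succ_iff.mp h')).trans (by rw [colorSeq_succ]; exact Set.subset_union_left)
    · have : m = n + 1 := le_antisymm h h'
      subst this; exact subset_rfl

lemma forced_of_colorSeq (G : SimpleGraph V) (S : Set V) (n : ℕ) :
    ∀ x ∈ colorSeq G S n, G.Forced S x := by
  induction n with
  | zero => exact fun x hx => .init hx
  | succ n ih =>
    intro x hx
    rw [colorSeq_succ] at hx
    rcases hx with hx | ⟨u, hu, hadj, hall⟩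
    · exact ih x hx
    · exact .force hadj (ih u hu) (fun y hy hne => ih y (hall y hy hne))

lemma colorSeq_of_forced [Fintype V] (G : SimpleGraph V) (S : Set V) {x : V}
    (h : G.Forced S x) : ∃ n, x ∈ colorSeq G S n := by
  classical
  induction h with
  | init h => exact ⟨0, h⟩
  | force hadj hu hall ihu ihall =>
    set c := colorSeq G S with hc
    let g : V → ℕ := fun y => if h : ∃ n, y ∈ c n then h.choose else 0
    have hg : ∀ y, (∃ n, y ∈ c n) → y ∈ c (g y) := by
      intro y hy
      simp only [g, dif_pos hy]
      exact hy.choose_spec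
    set N := Finset.univ.sup g with hN
    have hgN : ∀ y, (∃ n, y ∈ c n) → y ∈ c N := fun y hy =>
      colorSeq_mono G S (Finset.le_sup (Finset.mem_univ y)) (hg y hy)
    refine ⟨N + 1, ?_⟩
    rw [hc, colorSeq_succ]
    exact Or.inr ⟨_, hgN _ ihu, hadj, fun y hy hne => hgN y (ihall y hy hne)⟩

lemma replay [Fintype V] (G : SimpleGraph V) (v : V) (B : Set V)
    (T : Set ↥({v}ᶜ : Set V))
    (hB : ∀ x : ↥({v}ᶜ : Set V), (x : V) ∈ B → x ∈ T)
    (hforce : ∀ n (x : ↥({v}ᶜ : Set V)), v ∈ colorSeq G B n → G.Adj v x →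
        (x : V) ∉ colorSeq G B n →
        (∀ y, G.Adj v y → y ≠ (x : V) → y ∈ colorSeq G B n) → x ∈ T) :
    ∀ n (x : ↥({v}ᶜ : Set V)), (x : V) ∈ colorSeq G B n →
      (G.induce {v}ᶜ).Forced T x := by
  intro n
  induction n with
  | zero => exact fun x hx => .init (hB x hx)
  | succ n ih =>
    intro x hx
    rw [colorSeq_succ] at hx
    rcases hx with hx | ⟨u, hu, hadj, hall⟩
    · exact ih x hx
    by_cases hxn : (x : V) ∈ colorSeq G B n
    · exact ih x hxn
    by_cases huv : u = v
    · subst huv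
      exact .init (hforce n x hu hadj hxn hall)
    · have hu' : u ∈ ({v}ᶜ : Set V) := huv
      have hadj' : (G.induce {v}ᶜ).Adj ⟨u, hu'⟩ x := hadj
      refine .force (v := ⟨u, hu'⟩) hadj' (ih _ hu) ?_
      intro y hy hne
      exact ih y (hall (y : V) hy (fun h => hne (Subtype.ext h)))

lemma lower [Fintype V] [DecidableEq V] (G : SimpleGraph V) (v : V) :
    G.zeroForcingNumber ≤ (G.induce {v}ᶜ).zeroForcingNumber + 1 := by
  classical
  have hne : {k | ∃ S : Finset ↥({v}ᶜ : Set V),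
      (G.induce {v}ᶜ).IsZeroForcingSet ↑S ∧ S.card = k}.Nonempty :=
    ⟨_, Finset.univ, fun x => .init (by simp), rfl⟩
  obtain ⟨S, hS, hScard⟩ := Nat.sInf_mem hne
  set T : Finset V := S.image Subtype.val ∪ {v} with hT
  have hvT : v ∈ (T : Set V) := by simp [hT]
  have aux : ∀ x, (G.induce {v}ᶜ).Forced ↑S x → G.Forced ↑T ↑x := by
    intro x hx
    induction hx with
    | init h =>
      refine .init ?_
      simp only [hT, Finset.coe_union, Finset.coe_image, Set.mem_union]
      exact Or.inl ⟨_, h, rfl⟩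
    | force hadj hu hall ihu ihall =>
      refine .force hadj ihu ?_
      intro z hz hzne
      by_cases hzv : z = v
      · subst hzv; exact .init hvT
      · have hz' : z ∈ ({v}ᶜ : Set V) := hzv
        exact ihall ⟨z, hz'⟩ hz (fun h => hzne (congrArg Subtype.val h))
  have hTzfs : G.IsZeroForcingSet ↑T := by
    intro x
    by_cases hxv : x = v
    · subst hxv; exact .init hvT
    · have hx' : x ∈ ({v}ᶜ : Set V) := hxv
      exact aux ⟨x, hx'⟩ (hS ⟨x, hx'⟩)
  have h1 : G.zeroForcingNumber ≤ T.card := Nat.sInf_le ⟨T, hTzfs, rfl⟩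
  have h2 : T.card ≤ S.card + 1 := by
    calc T.card ≤ (S.image Subtype.val).card + ({v} : Finset V).card := Finset.card_union_le _ _
    _ ≤ S.card + 1 := by
        simp [Finset.card_image_of_injective _ Subtype.val_injective]
  have : (G.induce {v}ᶜ).zeroForcingNumber = S.card := hScard.symm
  omega

lemma upper [Fintype V] [DecidableEq V] (G : SimpleGraph V) (v : V) :
    (G.induce {v}ᶜ).zeroForcingNumber ≤ G.zeroForcingNumber + 1 := by
  classical
  haveI : DecidablePred (· ∈ ({v}ᶜ : Set V)) := fun x => decidable_of_iff (x ≠ v) (by simp)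
  have hne : {k | ∃ S : Finset V, G.IsZeroForcingSet ↑S ∧ S.card = k}.Nonempty :=
    ⟨_, Finset.univ, fun x => .init (by simp), rfl⟩
  obtain ⟨B, hB, hBcard⟩ := Nat.sInf_mem hne
  set c := colorSeq G (↑B : Set V) with hc
  set Q : ℕ → Prop := fun n => ∃ w, v ∈ c n ∧ G.Adj v w ∧ w ∉ c n ∧
      ∀ y, G.Adj v y → y ≠ w → y ∈ c n with hQdef
  by_cases hQ : ∃ n, Q n
  · -- v performs a force; add the forced vertex to the set
    obtain ⟨w₀, hv0, hadj0, hw0, hall0⟩ := Nat.find_spec hQ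
    set n₀ := Nat.find hQ with hn₀
    set F : Finset ↥({v}ᶜ : Set V) := (B ∪ {w₀}).subtype _ with hF
    have hFzfs : (G.induce {v}ᶜ).IsZeroForcingSet ↑F := by
      intro x
      obtain ⟨n, hn⟩ := colorSeq_of_forced G (↑B) (hB (x : V))
      refine replay G v (↑B) (↑F) ?_ ?_ n x hn
      · intro y hy
        simp only [hF, Finset.mem_coe, Finset.mem_subtype, Finset.mem_union]
        exact Or.inl hy
      · intro m y hvm hadj hym hallm
        have hle : n₀ ≤ m := Nat.find_min' hQ ⟨(y : V), hvm, hadj, hym, hallm⟩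
        have hyw : (y : V) = w₀ := by
          by_contra hne'
          exact hym (colorSeq_mono G (↑B) hle (hall0 (y : V) hadj hne'))
        simp only [hF, Finset.mem_coe, Finset.mem_subtype, Finset.mem_union, hyw]
        exact Or.inr (Finset.mem_singleton_self w₀)
    have hcard : F.card ≤ B.card + 1 := by
      have h1 : F.card ≤ (B ∪ {w₀}).card := by
        have := Finset.subtype_map (s := B ∪ {w₀}) (p := (· ∈ ({v}ᶜ : Set V)))
        calc F.card = (F.map (Function.Embedding.subtype _)).card := (Finset.card_map _).symm
        _ = ((B ∪ {w₀}).filter (· ∈ ({v}ᶜ : Set V))).card := by rw [hF, this]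
        _ ≤ (B ∪ {w₀}).card := Finset.card_filter_le _ _
      calc F.card ≤ (B ∪ {w₀}).card := h1
      _ ≤ B.card + ({w₀} : Finset V).card := Finset.card_union_le _ _
      _ = B.card + 1 := by simp
    refine le_trans (Nat.sInf_le ⟨F, hFzfs, rfl⟩) ?_
    have hz : G.zeroForcingNumber = sInf {k | ∃ S : Finset V, G.IsZeroForcingSet ↑S ∧ S.card = k} := rfl
    omega
  · -- v never performs a force
    push_neg at hQ
    set F : Finset ↥({v}ᶜ : Set V) := B.subtype _ with hF
    have hFzfs : (G.induce {v}ᶜ).IsZeroForcingSet ↑F := by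
      intro x
      obtain ⟨n, hn⟩ := colorSeq_of_forced G (↑B) (hB (x : V))
      refine replay G v (↑B) (↑F) ?_ ?_ n x hn
      · intro y hy
        simp only [hF, Finset.mem_coe, Finset.mem_subtype]
        exact hy
      · intro m y hvm hadj hym hallm
        exact absurd ⟨(y : V), hvm, hadj, hym, hallm⟩ (hQ m)
    have hcard : F.card ≤ B.card := by
      have := Finset.subtype_map (s := B) (p := (· ∈ ({v}ᶜ : Set V)))
      calc F.card = (F.map (Function.Embedding.subtype _)).card := (Finset.card_map _).symm
      _ = (B.filter (· ∈ ({v}ᶜ : Set V))).card := by rw [hF, this]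
      _ ≤ B.card := Finset.card_filter_le _ _
    refine le_trans (Nat.sInf_le ⟨F, hFzfs, rfl⟩) ?_
    have hz : G.zeroForcingNumber = sInf {k | ∃ S : Finset V, G.IsZeroForcingSet ↑S ∧ S.card = k} := rfl
    omega

end ZFAux

/-- vertex deletion changes `Z` by at most 1. -/
theorem zf_delete_vertex {V : Type*} [Fintype V] [DecidableEq V] (G : SimpleGraph V)
    (hn : 2 ≤ Fintype.card V) (v : V) :
    G.zeroForcingNumber - 1 ≤ (G.induce {v}ᶜ).zeroForcingNumber ∧
    (G.induce {v}ᶜ).zeroForcingNumber ≤ G.zeroForcingNumber + 1 := by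
  have h1 := ZFAux.lower G v
  have h2 := ZFAux.upper G v
  omega
end

section
/- For any graph G on n ≥ 2 vertices and any edge e of G, Z(G) − 1 ≤ Z(G − e) ≤ Z(G) + 1. -/
namespace SimpleGraph

variable {V : Type*}

private lemma Forced.absorb (G : SimpleGraph V) {S T : Set V}
    (hT : ∀ x ∈ T, G.Forced S x) {v : V} (h : G.Forced T v) : G.Forced S v := by
  induction h with
  | init h => exact hT _ h
  | force hadj _ _ ih1 ih2 => exact .force hadj ih1 ih2

private lemma zf_key_ne {u v x y : V} (hxu : x ≠ u) (hxv : x ≠ v) :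
    s(x, y) ≠ s(u, v) := by
  intro h
  rw [Sym2.eq_iff] at h
  tauto

/-- If `v` is forced from `B ∪ {u}` in `H`, and `H` agrees with `G` except possibly at edge
`uv`, and `B` forces in `G`, then `B ∪ {u}` forces in `H`. -/
private lemma zf_key_one (G H : SimpleGraph V) (u v : V)
    (hGH : ∀ x y, s(x, y) ≠ s(u, v) → (G.Adj x y ↔ H.Adj x y))
    {B : Set V} (hB : G.IsZeroForcingSet B)
    (h1 : H.Forced (insert u B) v) : H.IsZeroForcingSet (insert u B) := by
  have hA : ∀ w, G.Forced B w → H.Forced (insert u (insert v B)) w := by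
    intro w hw
    induction hw with
    | init h => exact .init (Or.inr (Or.inr h))
    | @force x w hadj hx hnb ih1 ih2 =>
      by_cases hwu : w = u
      · exact .init (hwu ▸ Or.inl rfl)
      by_cases hwv : w = v
      · exact .init (hwv ▸ Or.inr (Or.inl rfl))
      have hsw : s(x, w) ≠ s(u, v) := by
        intro h; rw [Sym2.eq_iff] at h; tauto
      refine .force ((hGH x w hsw).mp hadj) ih1 ?_
      intro y hy hyw
      by_cases hyu : y = u
      · exact .init (hyu ▸ Or.inl rfl)
      by_cases hyv : y = v
      · exact .init (hyv ▸ Or.inr (Or.inl rfl))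
      have hsy : s(x, y) ≠ s(u, v) := by
        intro h; rw [Sym2.eq_iff] at h; tauto
      exact ih2 y ((hGH x y hsy).mpr hy) hyw
  intro w
  refine Forced.absorb H (T := insert u (insert v B)) ?_ (hA w (hB w))
  intro x hx
  simp only [Set.mem_insert_iff] at hx
  rcases hx with rfl | rfl | hx
  · exact .init (Or.inl rfl)
  · exact h1
  · exact .init (Or.inr hx)

/-- If `H` agrees with `G` except possibly at edge `uv`, and `B` forces in `G`, then
`B ∪ {u}` or `B ∪ {v}` forces in `H`. -/
private lemma zf_key (G H : SimpleGraph V) (u v : V)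
    (hGH : ∀ x y, s(x, y) ≠ s(u, v) → (G.Adj x y ↔ H.Adj x y))
    {B : Set V} (hB : G.IsZeroForcingSet B) :
    H.IsZeroForcingSet (insert u B) ∨ H.IsZeroForcingSet (insert v B) := by
  have hGH' : ∀ x y, s(x, y) ≠ s(v, u) → (G.Adj x y ↔ H.Adj x y) := by
    intro x y h
    refine hGH x y ?_
    rw [show (s(u, v) : Sym2 V) = s(v, u) from Sym2.eq_swap]
    exact h
  by_cases h1 : H.Forced (insert u B) v
  · exact Or.inl (zf_key_one G H u v hGH hB h1)
  by_cases h2 : H.Forced (insert v B) u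
  · exact Or.inr (zf_key_one G H v u hGH' hB h2)
  -- both fail: contradiction
  exfalso
  have main : ∀ w, G.Forced B w →
      H.Forced (insert u B) w ∧ H.Forced (insert v B) w := by
    intro w hw
    induction hw with
    | init h => exact ⟨.init (Or.inr h), .init (Or.inr h)⟩
    | @force x w hadj hx hnb ih1 ih2 =>
      have hxu : x ≠ u := fun h => h2 (h ▸ ih1.2)
      have hxv : x ≠ v := fun h => h1 (h ▸ ih1.1)
      have hadjH : H.Adj x w := (hGH x w (zf_key_ne hxu hxv)).mp hadj
      constructor
      · by_cases hwu : w = u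
        · exact .init (hwu ▸ Or.inl rfl)
        refine .force hadjH ih1.1 ?_
        intro y hy hyw
        by_cases hyu : y = u
        · exact .init (hyu ▸ Or.inl rfl)
        exact (ih2 y ((hGH x y (zf_key_ne hxu hxv)).mpr hy) hyw).1
      · by_cases hwv : w = v
        · exact .init (hwv ▸ Or.inl rfl)
        refine .force hadjH ih1.2 ?_
        intro y hy hyw
        by_cases hyv : y = v
        · exact .init (hyv ▸ Or.inl rfl)
        exact (ih2 y ((hGH x y (zf_key_ne hxu hxv)).mpr hy) hyw).2
  exact h2 (main u (hB u)).2

private lemma zf_nonempty [Fintype V] (G : SimpleGraph V) :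
    {k | ∃ S : Finset V, G.IsZeroForcingSet ↑S ∧ S.card = k}.Nonempty :=
  ⟨(Finset.univ : Finset V).card, Finset.univ, fun w => .init (by simp), rfl⟩

/-- If `H` agrees with `G` except possibly at edge `uv`, then `Z(H) ≤ Z(G) + 1`. -/
private lemma zf_le [Fintype V] (G H : SimpleGraph V) (u v : V)
    (hGH : ∀ x y, s(x, y) ≠ s(u, v) → (G.Adj x y ↔ H.Adj x y)) :
    H.zeroForcingNumber ≤ G.zeroForcingNumber + 1 := by
  classical
  have hmem : G.zeroForcingNumber ∈
      {k | ∃ S : Finset V, G.IsZeroForcingSet ↑S ∧ S.card = k} :=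
    Nat.sInf_mem (zf_nonempty G)
  obtain ⟨S, hS, hcard⟩ := hmem
  rcases zf_key G H u v hGH hS with h | h
  · calc H.zeroForcingNumber ≤ (insert u S).card :=
          Nat.sInf_le ⟨insert u S, by rwa [Finset.coe_insert], rfl⟩
      _ ≤ S.card + 1 := Finset.card_insert_le _ _
      _ = G.zeroForcingNumber + 1 := by rw [hcard]
  · calc H.zeroForcingNumber ≤ (insert v S).card :=
          Nat.sInf_le ⟨insert v S, by rwa [Finset.coe_insert], rfl⟩
      _ ≤ S.card + 1 := Finset.card_insert_le _ _
      _ = G.zeroForcingNumber + 1 := by rw [hcard]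

end SimpleGraph

/-- edge deletion changes `Z` by at most 1. -/
theorem zf_delete_edge {V : Type*} [Fintype V] (G : SimpleGraph V)
    (hn : 2 ≤ Fintype.card V) (u v : V) (he : G.Adj u v) :
    G.zeroForcingNumber - 1 ≤ (G.deleteEdges {s(u, v)}).zeroForcingNumber ∧
    (G.deleteEdges {s(u, v)}).zeroForcingNumber ≤ G.zeroForcingNumber + 1 := by
  have hagree : ∀ x y, s(x, y) ≠ s(u, v) →
      ((G.deleteEdges {s(u, v)}).Adj x y ↔ G.Adj x y) := by
    intro x y h
    simp [SimpleGraph.deleteEdges_adj, h]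
  constructor
  · rw [tsub_le_iff_right]
    exact SimpleGraph.zf_le (G.deleteEdges {s(u, v)}) G u v
      (fun x y h => (hagree x y h))
  · exact SimpleGraph.zf_le G (G.deleteEdges {s(u, v)}) u v
      (fun x y h => (hagree x y h).symm)
end

section
/- Let G be a graph with minimum degree δ ≥ 3 having a cut vertex v such that G − v has exactly two components and at least one component has girth at least 5. Then Z(G) ≥ 3δ − 6. -/
namespace ZFAux

open Set

variable {W : Type*} {K : SimpleGraph W}

lemma forced_mono {S T : Set W} (h : S ⊆ T) {x : W} (hx : K.Forced S x) : K.Forced T x := by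
  induction hx with
  | init hv => exact SimpleGraph.Forced.init (h hv)
  | force hadj _ _ ihv ihall => exact SimpleGraph.Forced.force hadj ihv ihall

lemma first_force {S : Set W} {w : W} (hw : K.Forced S w) :
    w ∉ S → ∃ a b, a ∈ S ∧ b ∉ S ∧ K.Adj a b ∧ ∀ u, K.Adj a u → u ≠ b → u ∈ S := by
  induction hw with
  | init h => intro hnw; exact absurd h hnw
  | @force v w hadj hv hall ihv ihall =>
    intro hnw
    by_cases hvS : v ∈ S
    · by_cases hX : ∀ u, K.Adj v u → u ≠ w → u ∈ S
      · exact ⟨v, w, hvS, hnw, hadj, hX⟩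
      · push_neg at hX
        obtain ⟨u, h1, h2, h3⟩ := hX
        exact ihall u h1 h2 h3
    · exact ihv hvS

inductive Proc (K : SimpleGraph W) (S : Set W) : Set W → Prop
  | base : Proc K S S
  | step {C : Set W} {a b : W} : Proc K S C → a ∈ C → b ∉ C → K.Adj a b →
      (∀ u, K.Adj a u → u ≠ b → u ∈ C) → Proc K S (insert b C)

lemma Proc.subset_left {S C : Set W} (h : Proc K S C) : S ⊆ C := by
  induction h with
  | base => exact subset_rfl
  | step _ _ _ _ _ ih => exact ih.trans (subset_insert _ _)

lemma proc_univ [Finite W] {S : Set W} (hS : K.IsZeroForcingSet S) : Proc K S univ := by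
  have main : ∀ (n : ℕ) (C : Set W), Proc K S C → (univ \ C).ncard ≤ n → Proc K S univ := by
    intro n
    induction n with
    | zero =>
      intro C hC hcard
      have h0 : (univ \ C) = ∅ := by
        rw [← Set.ncard_eq_zero (Set.toFinite _)]; omega
      have : C = univ := by
        rw [Set.diff_eq_empty] at h0
        exact (subset_univ C).antisymm h0
      rwa [this] at hC
    | succ n ih =>
      intro C hC hcard
      by_cases hCu : C = univ
      · rwa [hCu] at hC
      · obtain ⟨w, hw⟩ : ∃ w, w ∉ C := by
          by_contra h; push_neg at h; exact hCu (Set.eq_univ_of_forall h)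
        have hwF : K.Forced C w := forced_mono hC.subset_left (hS w)
        obtain ⟨a, b, haC, hbC, hadj, hall⟩ := first_force hwF hw
        apply ih _ (Proc.step hC haC hbC hadj hall)
        have hbmem : b ∈ univ \ C := ⟨mem_univ b, hbC⟩
        have h1 : (univ \ insert b C) = (univ \ C) \ {b} := by
          ext x; simp only [mem_diff, mem_univ, mem_insert_iff, mem_singleton_iff, true_and]
          tauto
        have h2 : ((univ \ C) \ {b}).ncard = (univ \ C).ncard - 1 :=
          Set.ncard_diff_singleton_of_mem hbmem
        have h3 : 1 ≤ (univ \ C).ncard := by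
          rw [Nat.one_le_iff_ne_zero]
          intro h
          rw [Set.ncard_eq_zero (Set.toFinite _)] at h
          simp [h] at hbmem
        rw [h1, h2]; omega
  exact main _ S Proc.base le_rfl


/-! ### Closed neighborhoods and counting in girth ≥ 5 graphs -/

/-- closed neighborhood as a set -/
def cnbr (K : SimpleGraph W) (x : W) : Set W := insert x (K.neighborSet x)

lemma mem_cnbr {x y : W} : y ∈ cnbr K x ↔ y = x ∨ K.Adj x y := by
  simp [cnbr]

lemma ncard_cnbr [Finite W] (x : W) : (cnbr K x).ncard = (K.neighborSet x).ncard + 1 :=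
  Set.ncard_insert_of_notMem (by simp) (Set.toFinite _)

variable (htri : ∀ {x y z : W}, K.Adj x y → K.Adj y z → K.Adj x z → False)
variable (hC4 : ∀ {a b x y : W}, a ≠ b → K.Adj a x → K.Adj a y → K.Adj b x → K.Adj b y → x = y)

include htri in
lemma cnbr_inter_adj {a b : W} (hab : K.Adj a b) : cnbr K a ∩ cnbr K b = {a, b} := by
  ext u
  simp only [mem_inter_iff, mem_cnbr, mem_insert_iff, mem_singleton_iff]
  constructor
  · rintro ⟨(rfl | h1), (rfl | h2)⟩
    · left; rfl
    · left; rfl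
    · right; rfl
    · exact absurd h1 (fun h1 => htri hab h2 h1)
  · rintro (rfl | rfl)
    · exact ⟨Or.inl rfl, Or.inr hab.symm⟩
    · exact ⟨Or.inr hab, Or.inl rfl⟩

include hC4 in
lemma cnbr_inter_nonadj [Finite W] {a b : W} (hne : a ≠ b) (hnadj : ¬ K.Adj a b) :
    (cnbr K a ∩ cnbr K b).ncard ≤ 1 := by
  rw [Set.ncard_le_one (Set.toFinite _)]
  have key : ∀ u ∈ cnbr K a ∩ cnbr K b, K.Adj a u ∧ K.Adj b u := by
    rintro u ⟨hu1, hu2⟩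
    rw [mem_cnbr] at hu1 hu2
    rcases hu1 with rfl | hu1
    · rcases hu2 with rfl | hu2
      · exact absurd rfl hne
      · exact absurd hu2.symm hnadj
    · rcases hu2 with rfl | hu2
      · exact absurd hu1 hnadj
      · exact ⟨hu1, hu2⟩
  intro x hx y hy
  obtain ⟨hx1, hx2⟩ := key x hx
  obtain ⟨hy1, hy2⟩ := key y hy
  exact hC4 hne hx1 hy1 hx2 hy2

include htri hC4 in
lemma cnbr_mid [Finite W] {a b c : W} (hab : a ≠ b) (hbc : b ≠ c) (hac : a ≠ c)
    (hnac : ¬ K.Adj a c) : (cnbr K b ∩ (cnbr K a ∪ cnbr K c)).ncard ≤ 3 := by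
  rw [Set.inter_union_distrib_left]
  by_cases h1 : K.Adj a b
  · by_cases h2 : K.Adj b c
    · have e1 : cnbr K b ∩ cnbr K a = {b, a} := cnbr_inter_adj htri h1.symm
      have e2 : cnbr K b ∩ cnbr K c = {b, c} := cnbr_inter_adj htri h2
      rw [e1, e2]
      have : ({b, a} ∪ {b, c} : Set W) = insert b (insert a {c}) := by
        ext u; simp; tauto
      rw [this]
      calc (insert b (insert a {c}) : Set W).ncard ≤ (insert a {c} : Set W).ncard + 1 :=
            Set.ncard_insert_le _ _
        _ ≤ (({c} : Set W).ncard + 1) + 1 := by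
            have := Set.ncard_insert_le a ({c} : Set W); omega
        _ ≤ 3 := by rw [Set.ncard_singleton]
    · have e1 : cnbr K b ∩ cnbr K a = {b, a} := cnbr_inter_adj htri h1.symm
      have e2 : (cnbr K b ∩ cnbr K c).ncard ≤ 1 := cnbr_inter_nonadj hC4 hbc h2
      calc _ ≤ (cnbr K b ∩ cnbr K a).ncard + (cnbr K b ∩ cnbr K c).ncard :=
            Set.ncard_union_le _ _
        _ ≤ 2 + 1 := by rw [e1]; have := Set.ncard_pair (Ne.symm hab); omega
        _ ≤ 3 := by norm_num
  · by_cases h2 : K.Adj b c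
    · have e1 : (cnbr K b ∩ cnbr K a).ncard ≤ 1 :=
        cnbr_inter_nonadj hC4 (Ne.symm hab) (fun h => h1 h.symm)
      have e2 : cnbr K b ∩ cnbr K c = {b, c} := cnbr_inter_adj htri h2
      calc _ ≤ (cnbr K b ∩ cnbr K a).ncard + (cnbr K b ∩ cnbr K c).ncard :=
            Set.ncard_union_le _ _
        _ ≤ 1 + 2 := by rw [e2]; have := Set.ncard_pair hbc; omega
        _ ≤ 3 := by norm_num
    · have e1 : (cnbr K b ∩ cnbr K a).ncard ≤ 1 :=
        cnbr_inter_nonadj hC4 (Ne.symm hab) (fun h => h1 h.symm)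
      have e2 : (cnbr K b ∩ cnbr K c).ncard ≤ 1 := cnbr_inter_nonadj hC4 hbc h2
      calc _ ≤ (cnbr K b ∩ cnbr K a).ncard + (cnbr K b ∩ cnbr K c).ncard :=
            Set.ncard_union_le _ _
        _ ≤ 3 := by omega

include htri hC4 in
lemma three_cnbr_ordered [Finite W] {m : ℕ} (hdeg : ∀ x, m ≤ (K.neighborSet x).ncard)
    {a b c : W} (hab : a ≠ b) (hbc : b ≠ c) (hac : a ≠ c) (hnac : ¬ K.Adj a c) :
    3 * m ≤ (cnbr K a ∪ cnbr K b ∪ cnbr K c).ncard + 1 := by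
  have hre : cnbr K a ∪ cnbr K b ∪ cnbr K c = (cnbr K a ∪ cnbr K c) ∪ cnbr K b :=
    Set.union_right_comm _ _ _
  have hA : m + 1 ≤ (cnbr K a).ncard := by rw [ncard_cnbr]; have := hdeg a; omega
  have hB : m + 1 ≤ (cnbr K b).ncard := by rw [ncard_cnbr]; have := hdeg b; omega
  have hC : m + 1 ≤ (cnbr K c).ncard := by rw [ncard_cnbr]; have := hdeg c; omega
  have hACi : (cnbr K a ∩ cnbr K c).ncard ≤ 1 := cnbr_inter_nonadj hC4 hac hnac
  have hAC : (cnbr K a ∪ cnbr K c).ncard + (cnbr K a ∩ cnbr K c).ncard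
      = (cnbr K a).ncard + (cnbr K c).ncard :=
    Set.ncard_union_add_ncard_inter _ _ (Set.toFinite _) (Set.toFinite _)
  have h2 : ((cnbr K a ∪ cnbr K c) ∪ cnbr K b).ncard + ((cnbr K a ∪ cnbr K c) ∩ cnbr K b).ncard
      = (cnbr K a ∪ cnbr K c).ncard + (cnbr K b).ncard :=
    Set.ncard_union_add_ncard_inter _ _ (Set.toFinite _) (Set.toFinite _)
  have hmid : ((cnbr K a ∪ cnbr K c) ∩ cnbr K b).ncard ≤ 3 := by
    rw [Set.inter_comm]; exact cnbr_mid htri hC4 hab hbc hac hnac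
  rw [hre]
  omega

include htri hC4 in
lemma three_cnbr [Finite W] {m : ℕ} (hdeg : ∀ x, m ≤ (K.neighborSet x).ncard)
    {a b c : W} (hab : a ≠ b) (hbc : b ≠ c) (hac : a ≠ c) :
    3 * m ≤ (cnbr K a ∪ cnbr K b ∪ cnbr K c).ncard + 1 := by
  by_cases h1 : K.Adj a c
  · by_cases h2 : K.Adj a b
    · -- b not adjacent to c, else triangle
      have h3 : ¬ K.Adj b c := fun h3 => htri h2 h3 h1
      have := three_cnbr_ordered htri hC4 hdeg (a := b) (b := a) (c := c)
        (Ne.symm hab) hac hbc h3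
      have hre : cnbr K b ∪ cnbr K a ∪ cnbr K c = cnbr K a ∪ cnbr K b ∪ cnbr K c := by
        rw [Set.union_comm (cnbr K b) (cnbr K a)]
      rwa [hre] at this
    · have := three_cnbr_ordered htri hC4 hdeg (a := a) (b := c) (c := b)
        hac (Ne.symm hbc) hab h2
      have hre : cnbr K a ∪ cnbr K c ∪ cnbr K b = cnbr K a ∪ cnbr K b ∪ cnbr K c :=
        Set.union_right_comm _ _ _
      rwa [hre] at this
  · exact three_cnbr_ordered htri hC4 hdeg hab hbc hac h1


/-! ### First three forces of a process -/

/-- Fact about the `i`-th force: forcer `u` was colored, `w` was not, and all neighbors of `u`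
are inside the colored set after the force. `P` = colored set before, `Q` = after. -/
def ForceFact (K : SimpleGraph W) (P : Set W) (u w : W) : Prop :=
  u ∈ P ∧ w ∉ P ∧ K.Adj u w ∧ ∀ y, K.Adj u y → y ∈ insert w P

lemma proc_cases {S C : Set W} (h : Proc K S C) :
    C = S
    ∨ (∃ u₁ w₁, ForceFact K S u₁ w₁ ∧ C = insert w₁ S)
    ∨ (∃ u₁ w₁ u₂ w₂, ForceFact K S u₁ w₁ ∧ ForceFact K (insert w₁ S) u₂ w₂ ∧
        C = insert w₂ (insert w₁ S))
    ∨ (∃ u₁ w₁ u₂ w₂ u₃ w₃, ForceFact K S u₁ w₁ ∧ ForceFact K (insert w₁ S) u₂ w₂ ∧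
        ForceFact K (insert w₂ (insert w₁ S)) u₃ w₃) := by
  induction h with
  | base => exact Or.inl rfl
  | @step C a b hproc haC hbC hadj hall ih =>
    have hfact : ∀ P : Set W, C = P → ForceFact K P a b := by
      rintro P rfl
      exact ⟨haC, hbC, hadj, fun y hy => by
        by_cases hyb : y = b
        · exact hyb ▸ mem_insert _ _
        · exact mem_insert_of_mem _ (hall y hy hyb)⟩
    rcases ih with rfl | ⟨u₁, w₁, f1, rfl⟩ | ⟨u₁, w₁, u₂, w₂, f1, f2, rfl⟩ | big
    · exact Or.inr (Or.inl ⟨a, b, hfact _ rfl, rfl⟩)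
    · exact Or.inr (Or.inr (Or.inl ⟨u₁, w₁, a, b, f1, hfact _ rfl, rfl⟩))
    · exact Or.inr (Or.inr (Or.inr ⟨u₁, w₁, u₂, w₂, a, b, f1, f2, hfact _ rfl⟩))
    · exact Or.inr (Or.inr (Or.inr big))

/-! ### The two zero forcing lower bounds -/

/-- Zero forcing number is at least the minimum degree. -/
lemma zfs_ge_mindeg [Finite W] [Nonempty W] {m : ℕ}
    (hdeg : ∀ x, m ≤ (K.neighborSet x).ncard)
    {T : Set W} (hT : K.IsZeroForcingSet T) : m ≤ T.ncard := by
  by_cases hTu : T = univ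
  · subst hTu
    have hx := hdeg (Classical.arbitrary W)
    have : (K.neighborSet (Classical.arbitrary W)).ncard ≤ (univ : Set W).ncard :=
      Set.ncard_le_ncard (subset_univ _) (Set.toFinite _)
    omega
  · obtain ⟨w, hw⟩ : ∃ w, w ∉ T := by
      by_contra h; push_neg at h; exact hTu (Set.eq_univ_of_forall h)
    obtain ⟨a, b, haT, hbT, hadj, hall⟩ := first_force (hT w) hw
    have hsub : insert a (K.neighborSet a \ {b}) ⊆ T := by
      rintro x (rfl | ⟨hx1, hx2⟩)
      · exact haT
      · exact hall x hx1 hx2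
    have h1 : (insert a (K.neighborSet a \ {b})).ncard
        = (K.neighborSet a \ {b}).ncard + 1 :=
      Set.ncard_insert_of_notMem (fun h => (by simp at h : K.Adj a a ∧ a ≠ b).1.ne rfl)
        (Set.toFinite _)
    have h2 : (K.neighborSet a).ncard - 1 ≤ (K.neighborSet a \ {b}).ncard :=
      Set.pred_ncard_le_ncard_diff_singleton _ _
    have h3 := hdeg a
    have h4 : (insert a (K.neighborSet a \ {b})).ncard ≤ T.ncard :=
      Set.ncard_le_ncard hsub (Set.toFinite _)
    omega

include htri hC4 in
/-- Davila–Kenter style bound: in a graph of girth at least 5 and minimum degree `m ≥ 2`,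
any zero forcing set has at least `3m - 4` vertices. -/
lemma dk [Finite W] [Nonempty W] {m : ℕ} (hm : 2 ≤ m)
    (hdeg : ∀ x, m ≤ (K.neighborSet x).ncard)
    {T : Set W} (hT : K.IsZeroForcingSet T) : 3 * m ≤ T.ncard + 4 := by
  -- a path a-b-c exists, giving |V| ≥ 3m - 1
  have hble : ∀ x : W, (cnbr K x).ncard ≤ (univ : Set W).ncard := fun x =>
    Set.ncard_le_ncard (subset_univ _) (Set.toFinite _)
  have hcardW : 3 * m ≤ (univ : Set W).ncard + 1 := by
    obtain ⟨b, hb⟩ : (K.neighborSet (Classical.arbitrary W)).Nonempty := by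
      rw [Set.nonempty_iff_ne_empty]
      intro h
      have := hdeg (Classical.arbitrary W)
      rw [h] at this; simp at this; omega
    set a := Classical.arbitrary W with ha
    obtain ⟨c, hc⟩ : (K.neighborSet b \ {a}).Nonempty := by
      rw [Set.nonempty_iff_ne_empty]
      intro h
      have h1 := hdeg b
      have h2 : (K.neighborSet b).ncard ≤ (K.neighborSet b \ {a}).ncard + 1 := by
        have h3 : K.neighborSet b ⊆ (K.neighborSet b \ {a}) ∪ {a} := by
          intro x hx; by_cases hxa : x = a
          · exact Or.inr (by simp [hxa])
          · exact Or.inl ⟨hx, hxa⟩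
        calc (K.neighborSet b).ncard ≤ ((K.neighborSet b \ {a}) ∪ {a}).ncard :=
              Set.ncard_le_ncard h3 (Set.toFinite _)
          _ ≤ (K.neighborSet b \ {a}).ncard + ({a} : Set W).ncard := Set.ncard_union_le _ _
          _ = (K.neighborSet b \ {a}).ncard + 1 := by rw [Set.ncard_singleton]
      rw [h, Set.ncard_empty] at h2; omega
    obtain ⟨hc1, hc2⟩ := hc
    have hab : K.Adj a b := hb
    have hbc : K.Adj b c := hc1
    have hac : a ≠ c := fun h => hc2 (h ▸ rfl)
    have := three_cnbr htri hC4 hdeg hab.ne hbc.ne hac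
    have hU : (cnbr K a ∪ cnbr K b ∪ cnbr K c).ncard ≤ (univ : Set W).ncard :=
      Set.ncard_le_ncard (subset_univ _) (Set.toFinite _)
    omega
  rcases proc_cases (proc_univ hT) with h | ⟨u₁, w₁, f1, h⟩ | ⟨u₁, w₁, u₂, w₂, f1, f2, h⟩ | big
  · have : (univ : Set W).ncard = T.ncard := by rw [h]
    omega
  · have : (univ : Set W).ncard ≤ T.ncard + 1 := by
      rw [h]; exact Set.ncard_insert_le _ _
    omega
  · have : (univ : Set W).ncard ≤ T.ncard + 2 := by
      rw [h]
      have g1 := Set.ncard_insert_le w₂ (insert w₁ T)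
      have g2 := Set.ncard_insert_le w₁ T
      omega
    omega
  · obtain ⟨u₁, w₁, u₂, w₂, u₃, w₃, f1, f2, f3⟩ := big
    obtain ⟨hu1, hw1, ha1, hn1⟩ := f1
    obtain ⟨hu2, hw2, ha2, hn2⟩ := f2
    obtain ⟨hu3, hw3, ha3, hn3⟩ := f3
    -- the three forcers are distinct
    have d12 : u₁ ≠ u₂ := by
      rintro rfl
      exact hw2 (hn1 w₂ ha2)
    have d13 : u₁ ≠ u₃ := by
      rintro rfl
      exact hw3 (mem_insert_of_mem _ (hn1 w₃ ha3))
    have d23 : u₂ ≠ u₃ := by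
      rintro rfl
      exact hw3 (hn2 w₃ ha3)
    -- everything in the closed neighborhoods except w₁,w₂,w₃ lies in T
    have hsub : (cnbr K u₁ ∪ cnbr K u₂ ∪ cnbr K u₃) \ {w₁, w₂, w₃} ⊆ T := by
      rintro x ⟨hxU, hxW⟩
      simp only [mem_insert_iff, mem_singleton_iff, not_or] at hxW
      obtain ⟨e1, e2, e3⟩ := hxW
      rcases hxU with (hx | hx) | hx <;> rw [mem_cnbr] at hx
      · rcases hx with rfl | hx
        · exact hu1
        · rcases hn1 x hx with h | h
          · exact absurd h e1
          · exact h
      · rcases hx with rfl | hx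
        · rcases hu2 with h | h
          · exact absurd h e1
          · exact h
        · rcases hn2 x hx with h | h
          · exact absurd h e2
          · rcases h with h | h
            · exact absurd h e1
            · exact h
      · rcases hx with rfl | hx
        · rcases hu3 with h | h
          · exact absurd h e2
          · rcases h with h | h
            · exact absurd h e1
            · exact h
        · rcases hn3 x hx with h | h
          · exact absurd h e3
          · rcases h with h | h
            · exact absurd h e2
            · rcases h with h | h
              · exact absurd h e1
              · exact h
    have hU3 := three_cnbr htri hC4 hdeg d12 d23 d13
    have hW3 : ({w₁, w₂, w₃} : Set W).ncard ≤ 3 := by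
      have g1 := Set.ncard_insert_le w₁ ({w₂, w₃} : Set W)
      have g2 := Set.ncard_insert_le w₂ ({w₃} : Set W)
      have g3 := Set.ncard_singleton w₃
      omega
    have hdiff : (cnbr K u₁ ∪ cnbr K u₂ ∪ cnbr K u₃).ncard
        ≤ ((cnbr K u₁ ∪ cnbr K u₂ ∪ cnbr K u₃) \ {w₁, w₂, w₃}).ncard + 3 := by
      have h1 : (cnbr K u₁ ∪ cnbr K u₂ ∪ cnbr K u₃)
          ⊆ ((cnbr K u₁ ∪ cnbr K u₂ ∪ cnbr K u₃) \ {w₁, w₂, w₃}) ∪ {w₁, w₂, w₃} := by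
        intro x hx
        by_cases h : x ∈ ({w₁, w₂, w₃} : Set W)
        · exact Or.inr h
        · exact Or.inl ⟨hx, h⟩
      calc (cnbr K u₁ ∪ cnbr K u₂ ∪ cnbr K u₃).ncard
          ≤ (((cnbr K u₁ ∪ cnbr K u₂ ∪ cnbr K u₃) \ {w₁, w₂, w₃}) ∪ {w₁, w₂, w₃}).ncard :=
            Set.ncard_le_ncard h1 (Set.toFinite _)
        _ ≤ ((cnbr K u₁ ∪ cnbr K u₂ ∪ cnbr K u₃) \ {w₁, w₂, w₃}).ncard
            + ({w₁, w₂, w₃} : Set W).ncard := Set.ncard_union_le _ _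
        _ ≤ _ := by omega
    have hfin : ((cnbr K u₁ ∪ cnbr K u₂ ∪ cnbr K u₃) \ {w₁, w₂, w₃}).ncard ≤ T.ncard :=
      Set.ncard_le_ncard hsub (Set.toFinite _)
    omega


/-! ### Girth at least 5 gives triangle-free and C4-free -/

lemma tri_free {α : Type*} {K : SimpleGraph α} (h5 : 5 ≤ K.egirth) :
    ∀ {x y z : α}, K.Adj x y → K.Adj y z → K.Adj x z → False := by
  intro x y z hxy hyz hxz
  let w : K.Walk x x := SimpleGraph.Walk.cons hxy
    (SimpleGraph.Walk.cons hyz (SimpleGraph.Walk.cons hxz.symm SimpleGraph.Walk.nil))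
  have hc : w.IsCycle := by
    have h1 : x ≠ y := hxy.ne
    have h2 : y ≠ z := hyz.ne
    have h3 : x ≠ z := hxz.ne
    constructor
    · constructor
      · simp [w, SimpleGraph.Walk.edges_cons, List.nodup_cons, Sym2.eq_iff]
        tauto
      · simp [w]
    · simp [w, SimpleGraph.Walk.support_cons, List.nodup_cons]
      tauto
  have := SimpleGraph.le_egirth.mp h5 x w hc
  have hl : w.length = 3 := by simp [w]
  rw [hl] at this
  norm_num at this

lemma c4_free {α : Type*} {K : SimpleGraph α} (h5 : 5 ≤ K.egirth) :
    ∀ {a b x y : α}, a ≠ b → K.Adj a x → K.Adj a y → K.Adj b x → K.Adj b y → x = y := by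
  intro a b x y hab hax hay hbx hby
  by_contra hxy
  let w : K.Walk a a := SimpleGraph.Walk.cons hax (SimpleGraph.Walk.cons hbx.symm
    (SimpleGraph.Walk.cons hby (SimpleGraph.Walk.cons hay.symm SimpleGraph.Walk.nil)))
  have hc : w.IsCycle := by
    have n1 : a ≠ x := hax.ne
    have n2 : a ≠ y := hay.ne
    have n3 : b ≠ x := hbx.ne
    have n4 : b ≠ y := hby.ne
    constructor
    · constructor
      · simp [w, SimpleGraph.Walk.edges_cons, List.nodup_cons, Sym2.eq_iff]
        tauto
      · simp [w]
    · simp [w, SimpleGraph.Walk.support_cons, List.nodup_cons]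
      tauto
  have := SimpleGraph.le_egirth.mp h5 a w hc
  have hl : w.length = 4 := by simp [w]
  rw [hl] at this
  norm_num at this

/-! ### Transfer of forces to the two sides of a cut vertex -/

section CutVertex

variable {V : Type*} {G : SimpleGraph V}

/-- A force internal to `H` transfers to the induced subgraph on `H`. -/
lemma induce_force_step {H : Set V} {X : Set ↥H} {C : Set V}
    (hC : ∀ x : H, ↑x ∈ C → (G.induce H).Forced X x)
    {a b : V} (ha : a ∈ H) (hb : b ∈ H) (haC : a ∈ C) (hadj : G.Adj a b)
    (hall : ∀ u, G.Adj a u → u ≠ b → u ∈ C) :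
    ∀ x : H, ↑x ∈ insert b C → (G.induce H).Forced X x := by
  intro x hx
  rcases mem_insert_iff.mp hx with heq | hxC
  · have hxb : x = ⟨b, hb⟩ := Subtype.ext heq
    subst hxb
    refine SimpleGraph.Forced.force (v := ⟨a, ha⟩) (by simpa using hadj) (hC ⟨a, ha⟩ haC) ?_
    intro u hu hne
    refine hC u (hall ↑u (by simpa using hu) ?_)
    intro h
    exact hne (Subtype.ext h)
  · exact hC x hxC

lemma induce_force_skip {H : Set V} {X : Set ↥H} {C : Set V}
    (hC : ∀ x : H, ↑x ∈ C → (G.induce H).Forced X x)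
    {b : V} (hb : b ∉ H) :
    ∀ x : H, ↑x ∈ insert b C → (G.induce H).Forced X x := by
  intro x hx
  rcases mem_insert_iff.mp hx with heq | hxC
  · exact absurd (heq ▸ x.2) hb
  · exact hC x hxC

/-- The key invariant of a forcing process in a graph with a cut vertex `v`:
either no force by `v` has happened yet (both sides are internally forced from `S`),
or `v` has forced a single vertex `b` on one of the two sides (and then all neighbors
of `v` are colored). -/
lemma main_inv (v : V) (H₁ H₂ : Set V)
    (hv1 : v ∉ H₁) (hv2 : v ∉ H₂) (hd : ∀ x, x ∈ H₁ → x ∈ H₂ → False)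
    (hmem : ∀ x, x ≠ v → x ∈ H₁ ∨ x ∈ H₂)
    (hsep : ∀ a ∈ H₁, ∀ b ∈ H₂, ¬ G.Adj a b)
    (S : Set V) {C : Set V} (hC : Proc G S C) :
    ((∀ x : H₁, ↑x ∈ C → (G.induce H₁).Forced (Subtype.val ⁻¹' S) x) ∧
     (∀ y : H₂, ↑y ∈ C → (G.induce H₂).Forced (Subtype.val ⁻¹' S) y))
    ∨ ((∀ u, G.Adj v u → u ∈ C) ∧
       (((∃ b : H₁, ∀ x : H₁, ↑x ∈ C →
             (G.induce H₁).Forced (insert b (Subtype.val ⁻¹' S)) x) ∧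
         (∀ y : H₂, ↑y ∈ C → (G.induce H₂).Forced (Subtype.val ⁻¹' S) y))
        ∨ ((∀ x : H₁, ↑x ∈ C → (G.induce H₁).Forced (Subtype.val ⁻¹' S) x) ∧
           (∃ b : H₂, ∀ y : H₂, ↑y ∈ C →
             (G.induce H₂).Forced (insert b (Subtype.val ⁻¹' S)) y)))) := by
  induction hC with
  | base =>
    exact Or.inl ⟨fun x hx => SimpleGraph.Forced.init hx, fun y hy => SimpleGraph.Forced.init hy⟩
  | @step C a b hproc haC hbC hadj hall ih =>
    by_cases hbv : b = v
    · subst hbv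
      rcases ih with ⟨I1, I2⟩ | ⟨hNv, IH2⟩
      · exact Or.inl ⟨induce_force_skip I1 hv1, induce_force_skip I2 hv2⟩
      · refine Or.inr ⟨fun u hu => mem_insert_of_mem _ (hNv u hu), ?_⟩
        rcases IH2 with ⟨⟨b₀, J1⟩, J2⟩ | ⟨J1, ⟨b₀, J2⟩⟩
        · exact Or.inl ⟨⟨b₀, induce_force_skip J1 hv1⟩, induce_force_skip J2 hv2⟩
        · exact Or.inr ⟨induce_force_skip J1 hv1, ⟨b₀, induce_force_skip J2 hv2⟩⟩
    · rcases hmem b hbv with hbH1 | hbH2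
      · have hb2 : b ∉ H₂ := fun h => hd b hbH1 h
        by_cases hav : a = v
        · subst hav
          rcases ih with ⟨I1, I2⟩ | ⟨hNv, _⟩
          · refine Or.inr ⟨?_, Or.inl ⟨⟨⟨b, hbH1⟩, ?_⟩, induce_force_skip I2 hb2⟩⟩
            · intro u hu
              by_cases hub : u = b
              · exact hub ▸ mem_insert _ _
              · exact mem_insert_of_mem _ (hall u hu hub)
            · intro x hx
              rcases mem_insert_iff.mp hx with heq | hxC
              · have hxb : x = ⟨b, hbH1⟩ := Subtype.ext heq
                subst hxb
                exact SimpleGraph.Forced.init (mem_insert _ _)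
              · exact forced_mono (subset_insert _ _) (I1 x hxC)
          · exact absurd (hNv b hadj) hbC
        · have haH1 : a ∈ H₁ := by
            rcases hmem a hav with h | h
            · exact h
            · exact absurd hadj.symm (hsep b hbH1 a h)
          rcases ih with ⟨I1, I2⟩ | ⟨hNv, IH2⟩
          · exact Or.inl ⟨induce_force_step I1 haH1 hbH1 haC hadj hall,
              induce_force_skip I2 hb2⟩
          · refine Or.inr ⟨fun u hu => mem_insert_of_mem _ (hNv u hu), ?_⟩
            rcases IH2 with ⟨⟨b₀, J1⟩, J2⟩ | ⟨J1, ⟨b₀, J2⟩⟩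
            · exact Or.inl ⟨⟨b₀, induce_force_step J1 haH1 hbH1 haC hadj hall⟩,
                induce_force_skip J2 hb2⟩
            · exact Or.inr ⟨induce_force_step J1 haH1 hbH1 haC hadj hall,
                ⟨b₀, induce_force_skip J2 hb2⟩⟩
      · have hb1 : b ∉ H₁ := fun h => hd b h hbH2
        by_cases hav : a = v
        · subst hav
          rcases ih with ⟨I1, I2⟩ | ⟨hNv, _⟩
          · refine Or.inr ⟨?_, Or.inr ⟨induce_force_skip I1 hb1, ⟨⟨b, hbH2⟩, ?_⟩⟩⟩
            · intro u hu
              by_cases hub : u = b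
              · exact hub ▸ mem_insert _ _
              · exact mem_insert_of_mem _ (hall u hu hub)
            · intro y hy
              rcases mem_insert_iff.mp hy with heq | hyC
              · have hyb : y = ⟨b, hbH2⟩ := Subtype.ext heq
                subst hyb
                exact SimpleGraph.Forced.init (mem_insert _ _)
              · exact forced_mono (subset_insert _ _) (I2 y hyC)
          · exact absurd (hNv b hadj) hbC
        · have haH2 : a ∈ H₂ := by
            rcases hmem a hav with h | h
            · exact absurd hadj (hsep a h b hbH2)
            · exact h
          rcases ih with ⟨I1, I2⟩ | ⟨hNv, IH2⟩
          · exact Or.inl ⟨induce_force_skip I1 hb1,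
              induce_force_step I2 haH2 hbH2 haC hadj hall⟩
          · refine Or.inr ⟨fun u hu => mem_insert_of_mem _ (hNv u hu), ?_⟩
            rcases IH2 with ⟨⟨b₀, J1⟩, J2⟩ | ⟨J1, ⟨b₀, J2⟩⟩
            · exact Or.inl ⟨⟨b₀, induce_force_skip J1 hb1⟩,
                induce_force_step J2 haH2 hbH2 haC hadj hall⟩
            · exact Or.inr ⟨induce_force_skip J1 hb1,
                ⟨b₀, induce_force_step J2 haH2 hbH2 haC hadj hall⟩⟩

end CutVertex

end ZFAux

open ZFAux Set

/-- `δ ≥ 3`, cut vertex `v` with `G − v` having exactly two components, one of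
girth at least 5; then `Z(G) ≥ 3δ − 6`. -/
theorem zf_cut_vertex {V : Type*} [Fintype V] [DecidableEq V] (G : SimpleGraph V)
    [DecidableRel G.Adj] (hδ : 3 ≤ G.minDegree) (v : V) (H₁ H₂ : Set V)
    (hdisj : Disjoint H₁ H₂) (hunion : H₁ ∪ H₂ = {v}ᶜ)
    (h₁ne : H₁.Nonempty) (h₂ne : H₂.Nonempty)
    (hsep : ∀ a ∈ H₁, ∀ b ∈ H₂, ¬ G.Adj a b)
    (h₁conn : (G.induce H₁).Connected) (h₂conn : (G.induce H₂).Connected)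
    (h₁girth : 5 ≤ (G.induce H₁).egirth) :
    3 * G.minDegree - 6 ≤ G.zeroForcingNumber := by
  classical
  have hne : {k | ∃ S : Finset V, G.IsZeroForcingSet ↑S ∧ S.card = k}.Nonempty :=
    ⟨Finset.univ.card, Finset.univ, fun w => SimpleGraph.Forced.init (by simp), rfl⟩
  refine le_csInf hne ?_
  rintro k ⟨S, hS, rfl⟩
  have hv1 : v ∉ H₁ := by
    intro h
    have hmem' : v ∈ H₁ ∪ H₂ := Or.inl h
    rw [hunion] at hmem'
    exact hmem' rfl
  have hv2 : v ∉ H₂ := by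
    intro h
    have hmem' : v ∈ H₁ ∪ H₂ := Or.inr h
    rw [hunion] at hmem'
    exact hmem' rfl
  have hd : ∀ x, x ∈ H₁ → x ∈ H₂ → False := fun x h1 h2 => Set.disjoint_left.mp hdisj h1 h2
  have hmem : ∀ x : V, x ≠ v → x ∈ H₁ ∨ x ∈ H₂ := by
    intro x hx
    have hx' : x ∈ ({v} : Set V)ᶜ := by simpa using hx
    rw [← hunion] at hx'
    exact hx'
  haveI hne1 : Nonempty ↥H₁ := h₁ne.to_subtype
  haveI hne2 : Nonempty ↥H₂ := h₂ne.to_subtype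
  -- degree bound for the induced graphs
  have degbound : ∀ (H : Set V), (∀ (x : ↥H) (y : V), G.Adj ↑x y → y = v ∨ y ∈ H) →
      ∀ x : ↥H, G.minDegree ≤ ((G.induce H).neighborSet x).ncard + 1 := by
    intro H hcl x
    have h1 : G.minDegree ≤ G.degree ↑x := G.minDegree_le_degree _
    have h2 : (G.neighborSet ↑x).ncard = G.degree ↑x := by
      rw [← SimpleGraph.card_neighborSet_eq_degree, ← Nat.card_eq_fintype_card,
        Nat.card_coe_set_eq]
    have h3 : G.neighborSet ↑x ⊆ (Subtype.val '' ((G.induce H).neighborSet x)) ∪ {v} := by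
      intro y hy
      rcases hcl x y hy with rfl | hyH
      · exact Or.inr rfl
      · exact Or.inl ⟨⟨y, hyH⟩, by simpa using hy, rfl⟩
    have h4 : (G.neighborSet ↑x).ncard ≤ ((G.induce H).neighborSet x).ncard + 1 := by
      calc (G.neighborSet ↑x).ncard
          ≤ ((Subtype.val '' ((G.induce H).neighborSet x)) ∪ {v}).ncard :=
            Set.ncard_le_ncard h3 (Set.toFinite _)
        _ ≤ (Subtype.val '' ((G.induce H).neighborSet x)).ncard + ({v} : Set V).ncard :=
            Set.ncard_union_le _ _
        _ = ((G.induce H).neighborSet x).ncard + 1 := by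
            rw [Set.ncard_image_of_injective _ Subtype.val_injective, Set.ncard_singleton]
    omega
  have hcl1 : ∀ (x : ↥H₁) (y : V), G.Adj ↑x y → y = v ∨ y ∈ H₁ := by
    intro x y hxy
    by_cases hyv : y = v
    · exact Or.inl hyv
    · rcases hmem y hyv with h | h
      · exact Or.inr h
      · exact absurd hxy (hsep ↑x x.2 y h)
  have hcl2 : ∀ (x : ↥H₂) (y : V), G.Adj ↑x y → y = v ∨ y ∈ H₂ := by
    intro x y hxy
    by_cases hyv : y = v
    · exact Or.inl hyv
    · rcases hmem y hyv with h | h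
      · exact absurd hxy.symm (hsep y h ↑x x.2)
      · exact Or.inr h
  have hm : 2 ≤ G.minDegree - 1 := by omega
  have hdeg1 : ∀ x : ↥H₁, G.minDegree - 1 ≤ ((G.induce H₁).neighborSet x).ncard := by
    intro x; have := degbound H₁ hcl1 x; omega
  have hdeg2 : ∀ x : ↥H₂, G.minDegree - 1 ≤ ((G.induce H₂).neighborSet x).ncard := by
    intro x; have := degbound H₂ hcl2 x; omega
  have hproc : Proc G (↑S : Set V) Set.univ := proc_univ hS
  have hinv := main_inv v H₁ H₂ hv1 hv2 hd hmem hsep (↑S : Set V) hproc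
  have hcard1 : (Subtype.val ⁻¹' (↑S : Set V) : Set ↥H₁).ncard = ((↑S : Set V) ∩ H₁).ncard := by
    rw [← Set.ncard_image_of_injective _ Subtype.val_injective,
      Set.image_preimage_eq_inter_range, Subtype.range_coe]
  have hcard2 : (Subtype.val ⁻¹' (↑S : Set V) : Set ↥H₂).ncard = ((↑S : Set V) ∩ H₂).ncard := by
    rw [← Set.ncard_image_of_injective _ Subtype.val_injective,
      Set.image_preimage_eq_inter_range, Subtype.range_coe]
  have hsum : ((↑S : Set V) ∩ H₁).ncard + ((↑S : Set V) ∩ H₂).ncard ≤ S.card := by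
    have hdisj' : Disjoint ((↑S : Set V) ∩ H₁) ((↑S : Set V) ∩ H₂) :=
      hdisj.mono inter_subset_right inter_subset_right
    have he := Set.ncard_union_eq hdisj' (Set.toFinite _) (Set.toFinite _)
    have hsub : ((↑S : Set V) ∩ H₁) ∪ ((↑S : Set V) ∩ H₂) ⊆ (↑S : Set V) := by
      rintro x (h | h) <;> exact h.1
    have h2 := Set.ncard_le_ncard hsub (Set.toFinite _)
    rw [Set.ncard_coe_finset] at h2
    omega
  rcases hinv with ⟨I1, I2⟩ | ⟨_, ⟨⟨b₀, J1⟩, J2⟩ | ⟨J1, ⟨b₀, J2⟩⟩⟩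
  · have hz1 : (G.induce H₁).IsZeroForcingSet (Subtype.val ⁻¹' (↑S : Set V)) :=
      fun x => I1 x (mem_univ _)
    have hz2 : (G.induce H₂).IsZeroForcingSet (Subtype.val ⁻¹' (↑S : Set V)) :=
      fun y => I2 y (mem_univ _)
    have b1 := dk (tri_free h₁girth) (c4_free h₁girth) hm hdeg1 hz1
    have b2 := zfs_ge_mindeg hdeg2 hz2
    rw [hcard1] at b1
    rw [hcard2] at b2
    omega
  · have hz1 : (G.induce H₁).IsZeroForcingSet (insert b₀ (Subtype.val ⁻¹' (↑S : Set V))) :=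
      fun x => J1 x (mem_univ _)
    have hz2 : (G.induce H₂).IsZeroForcingSet (Subtype.val ⁻¹' (↑S : Set V)) :=
      fun y => J2 y (mem_univ _)
    have b1 := dk (tri_free h₁girth) (c4_free h₁girth) hm hdeg1 hz1
    have b1' : (insert b₀ (Subtype.val ⁻¹' (↑S : Set V)) : Set ↥H₁).ncard
        ≤ (Subtype.val ⁻¹' (↑S : Set V) : Set ↥H₁).ncard + 1 := Set.ncard_insert_le _ _
    have b2 := zfs_ge_mindeg hdeg2 hz2
    rw [hcard1] at b1'
    rw [hcard2] at b2
    omega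
  · have hz1 : (G.induce H₁).IsZeroForcingSet (Subtype.val ⁻¹' (↑S : Set V)) :=
      fun x => J1 x (mem_univ _)
    have hz2 : (G.induce H₂).IsZeroForcingSet (insert b₀ (Subtype.val ⁻¹' (↑S : Set V))) :=
      fun y => J2 y (mem_univ _)
    have b1 := dk (tri_free h₁girth) (c4_free h₁girth) hm hdeg1 hz1
    have b2 := zfs_ge_mindeg hdeg2 hz2
    have b2' : (insert b₀ (Subtype.val ⁻¹' (↑S : Set V)) : Set ↥H₂).ncard
        ≤ (Subtype.val ⁻¹' (↑S : Set V) : Set ↥H₂).ncard + 1 := Set.ncard_insert_le _ _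
    rw [hcard1] at b1
    rw [hcard2] at b2'
    omega
end

section
/- Let G be a graph with minimum degree δ ≥ 3, girth g ≥ 5, and a cut edge e. Then Z(G) ≥ 4δ − 9. -/
namespace ZFAux

open SimpleGraph Finset

variable {V : Type*}

/-! ### Girth consequences -/

lemma no_tri {G : SimpleGraph V} (hg : 5 ≤ G.egirth) {a b c : V}
    (hab : G.Adj a b) (hbc : G.Adj b c) (hca : G.Adj c a) : False := by
  have hcyc : (SimpleGraph.Walk.cons hab (SimpleGraph.Walk.cons hbc
      (SimpleGraph.Walk.cons hca SimpleGraph.Walk.nil))).IsCycle := by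
    rw [SimpleGraph.Walk.isCycle_def]
    have h1 := hab.ne
    have h2 := hbc.ne
    have h3 := hca.ne
    refine ⟨?_, by simp, ?_⟩
    · rw [SimpleGraph.Walk.isTrail_def]
      simp only [SimpleGraph.Walk.edges_cons, SimpleGraph.Walk.edges_nil,
        List.nodup_cons, List.mem_cons, List.not_mem_nil, List.nodup_nil]
      refine ⟨?_, ⟨?_, by simp, by simp⟩⟩ <;> simp [Sym2.eq_iff] <;> tauto
    · simp only [SimpleGraph.Walk.support_cons, SimpleGraph.Walk.support_nil,
        List.tail_cons, List.nodup_cons, List.mem_cons, List.not_mem_nil, List.nodup_nil]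
      refine ⟨by tauto, by tauto, by simp, by simp⟩
  have h5 := SimpleGraph.le_egirth.mp hg a _ hcyc
  simp only [SimpleGraph.Walk.length_cons, SimpleGraph.Walk.length_nil] at h5
  have : (5 : ℕ) ≤ 0 + 1 + 1 + 1 := by exact_mod_cast h5
  omega

lemma no_c4 {G : SimpleGraph V} (hg : 5 ≤ G.egirth) {a b c d : V}
    (hac : a ≠ c) (hbd : b ≠ d)
    (hab : G.Adj a b) (hbc : G.Adj b c) (hcd : G.Adj c d) (hda : G.Adj d a) : False := by
  have hcyc : (SimpleGraph.Walk.cons hab (SimpleGraph.Walk.cons hbc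
      (SimpleGraph.Walk.cons hcd (SimpleGraph.Walk.cons hda SimpleGraph.Walk.nil)))).IsCycle := by
    rw [SimpleGraph.Walk.isCycle_def]
    have h1 := hab.ne
    have h2 := hbc.ne
    have h3 := hcd.ne
    have h4 := hda.ne
    refine ⟨?_, by simp, ?_⟩
    · rw [SimpleGraph.Walk.isTrail_def]
      simp only [SimpleGraph.Walk.edges_cons, SimpleGraph.Walk.edges_nil,
        List.nodup_cons, List.mem_cons, List.not_mem_nil, List.nodup_nil]
      refine ⟨?_, ?_, ?_, by simp, by simp⟩ <;> simp [Sym2.eq_iff] <;> tauto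
    · simp only [SimpleGraph.Walk.support_cons, SimpleGraph.Walk.support_nil,
        List.tail_cons, List.nodup_cons, List.mem_cons, List.not_mem_nil, List.nodup_nil]
      refine ⟨by tauto, by tauto, by tauto, by simp, by simp⟩
  have h5 := SimpleGraph.le_egirth.mp hg a _ hcyc
  simp only [SimpleGraph.Walk.length_cons, SimpleGraph.Walk.length_nil] at h5
  have : (5 : ℕ) ≤ 0 + 1 + 1 + 1 + 1 := by exact_mod_cast h5
  omega

/-! ### Relative forcing -/

inductive RForced (G : SimpleGraph V) (W : Set V) (T : Set V) : V → Prop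
  | init {v : V} : v ∈ T → RForced G W T v
  | force {v w : V} : v ∈ W → w ∈ W → G.Adj v w → RForced G W T v →
      (∀ u, G.Adj v u → u ∈ W → u ≠ w → RForced G W T u) → RForced G W T w

def rstage (G : SimpleGraph V) (W T : Set V) : ℕ → Set V
  | 0 => T
  | n + 1 => rstage G W T n ∪ {w | w ∈ W ∧ ∃ v, v ∈ W ∧ G.Adj v w ∧ v ∈ rstage G W T n ∧
      ∀ u, G.Adj v u → u ∈ W → u ≠ w → u ∈ rstage G W T n}

lemma rstage_succ_subset (G : SimpleGraph V) (W T : Set V) (n : ℕ) :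
    rstage G W T n ⊆ rstage G W T (n + 1) := by
  rw [rstage]; exact Set.subset_union_left

lemma rstage_mono (G : SimpleGraph V) (W T : Set V) {m n : ℕ} (h : m ≤ n) :
    rstage G W T m ⊆ rstage G W T n := by
  induction n with
  | zero => simp_all
  | succ n ih =>
    rcases Nat.lt_or_ge m (n + 1) with h' | h'
    · exact fun x hx => rstage_succ_subset G W T n (ih (by omega) hx)
    · have : m = n + 1 := by omega
      subst this; exact fun x hx => hx

lemma rforced_rstage [Fintype V] (G : SimpleGraph V) (W T : Set V) {v : V}
    (h : RForced G W T v) : ∃ n, v ∈ rstage G W T n := by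
  classical
  induction h with
  | init h => exact ⟨0, h⟩
  | @force v w hvW hwW hadj _ _ ihv ihall =>
    obtain ⟨nv, hnv⟩ := ihv
    set g : V → ℕ := fun u =>
      if h : ∃ n, u ∈ rstage G W T n then Nat.find h else 0 with hg
    set N := nv ⊔ (Finset.univ : Finset V).sup g with hN
    refine ⟨N + 1, Or.inr ⟨hwW, v, hvW, hadj, rstage_mono G W T le_sup_left hnv, ?_⟩⟩
    intro u hu huW hne
    have h' : ∃ n, u ∈ rstage G W T n := ihall u hu huW hne
    have hgu : u ∈ rstage G W T (g u) := by
      rw [hg]; simp only [dif_pos h']; exact Nat.find_spec h'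
    exact rstage_mono G W T (le_trans (Finset.le_sup (Finset.mem_univ u)) le_sup_right) hgu

lemma forced_runiv {G : SimpleGraph V} {S : Set V} {v : V}
    (h : G.Forced S v) : RForced G Set.univ S v := by
  induction h with
  | init h => exact .init h
  | force hadj _ _ ihv ihall =>
    exact .force trivial trivial hadj ihv (fun u hu _ hne => ihall u hu hne)

/-- Simulation: the global process restricted to a side `W` with port `p`. -/
lemma forced_side {G : SimpleGraph V} {S : Set V} {W : Set V} {p q : V}
    (hside : ∀ a ∈ W, ∀ u, G.Adj a u → u ∈ W ∨ (a = p ∧ u = q))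
    {v : V} (h : G.Forced S v) : v ∈ W → RForced G W ((S ∩ W) ∪ {p}) v := by
  induction h with
  | init h => exact fun hv => .init (Or.inl ⟨h, hv⟩)
  | @force v' w hadj _ _ ihv ihall =>
    intro hw
    by_cases hwp : w = p
    · exact .init (Or.inr (by simp [hwp]))
    · have hv'W : v' ∈ W := by
        rcases hside w hw v' hadj.symm with h | ⟨h1, _⟩
        · exact h
        · exact absurd h1 hwp
      exact .force hv'W hw hadj (ihv hv'W) (fun u hu huW hne => ihall u hu hne huW)

/-- If the port `p` of side `W` is colored no later than its external neighbor `q`,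
then the side forces itself from `S ∩ W` alone. -/
lemma good_side {G : SimpleGraph V} {S : Set V} {W : Set V} {p q : V}
    (hside : ∀ a ∈ W, ∀ u, G.Adj a u → u ∈ W ∨ (a = p ∧ u = q))
    (hgc : ∀ n, q ∈ rstage G Set.univ S n → p ∈ rstage G Set.univ S n) :
    ∀ n, ∀ v ∈ rstage G Set.univ S n, v ∈ W → RForced G W (S ∩ W) v := by
  intro n
  induction n with
  | zero => exact fun v hv hvW => .init ⟨hv, hvW⟩
  | succ n ih =>
    intro v hv hvW
    rw [rstage] at hv
    rcases hv with hv | ⟨-, v', -, hadj, hv', hall⟩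
    · exact ih v hv hvW
    · rcases hside v hvW v' hadj.symm with hv'W | ⟨hvp, hv'q⟩
      · refine .force hv'W hvW hadj (ih v' hv' hv'W) ?_
        intro u hu huW hne
        exact ih u (hall u hu trivial hne) huW
      · subst hvp; subst hv'q
        exact ih v (hgc n hv') hvW

lemma gc_or (G : SimpleGraph V) (S : Set V) (p q : V) :
    (∀ n, q ∈ rstage G Set.univ S n → p ∈ rstage G Set.univ S n) ∨
    (∀ n, p ∈ rstage G Set.univ S n → q ∈ rstage G Set.univ S n) := by
  by_contra h
  push_neg at h
  obtain ⟨⟨n, hqn, hpn⟩, ⟨m, hpm, hqm⟩⟩ := h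
  rcases Nat.le_total n m with h' | h'
  · exact hqm (rstage_mono G Set.univ S h' hqn)
  · exact hpn (rstage_mono G Set.univ S h' hpm)

/-! ### Auxiliary counting facts -/

lemma card_le_erase_add_one {α : Type*} [DecidableEq α] (s : Finset α) (a : α) :
    s.card ≤ (s.erase a).card + 1 := by
  by_cases h : a ∈ s
  · rw [Finset.card_erase_add_one h]
  · rw [Finset.erase_eq_of_notMem h]; omega

/-! ### The main counting lemma for one side -/

lemma count_main [Fintype V] {G : SimpleGraph V} [DecidableRel G.Adj] {δ : ℕ}
    (hg : 5 ≤ G.egirth) (hδ : 3 ≤ δ)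
    (hdeg : ∀ v, δ ≤ G.degree v)
    {W : Set V} {p q : V} (hp : p ∈ W)
    (hside : ∀ a ∈ W, ∀ u, G.Adj a u → u ∈ W ∨ (a = p ∧ u = q))
    (T : Finset V) (hT : (T : Set V) ⊆ W)
    (hforce : ∀ w ∈ W, RForced G W (↑T) w) :
    2 * δ ≤ T.card + 4 := by
  classical
  set C : ℕ → Set V := rstage G W (↑T) with hC
  set WF : Finset V := Finset.univ.filter (· ∈ W) with hWF
  have hmemWF : ∀ u : V, u ∈ WF ↔ u ∈ W := by
    intro u; simp [hWF]
  have hTWF : T ⊆ WF := fun u hu => (hmemWF u).mpr (hT hu)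
  -- neighborhood cardinalities within W
  set nbrW : V → Finset V := fun v => (G.neighborFinset v).filter (· ∈ W) with hnbrW
  have hnbr_sub : ∀ v, nbrW v ⊆ G.neighborFinset v := fun v => Finset.filter_subset _ _
  have hnbr_mem : ∀ v u : V, u ∈ nbrW v ↔ G.Adj v u ∧ u ∈ W := by
    intro v u; simp [hnbrW]
  have hnbr1 : ∀ v ∈ W, δ ≤ (nbrW v).card + 1 := by
    intro v hv
    have hsub : (G.neighborFinset v).erase q ⊆ nbrW v := by
      intro u hu
      rw [Finset.mem_erase, SimpleGraph.mem_neighborFinset] at hu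
      rw [hnbr_mem]
      refine ⟨hu.2, ?_⟩
      rcases hside v hv u hu.2 with h | ⟨_, h2⟩
      · exact h
      · exact absurd h2 hu.1
    have h1 := Finset.card_le_card hsub
    have h2 := card_le_erase_add_one (G.neighborFinset v) q
    have hdv : δ ≤ (G.neighborFinset v).card := by
      rw [SimpleGraph.card_neighborFinset_eq_degree]; exact hdeg v
    omega
  have hnbr2 : ∀ v ∈ W, v ≠ p → δ ≤ (nbrW v).card := by
    intro v hv hvp
    have : nbrW v = G.neighborFinset v := by
      rw [hnbrW]
      apply Finset.filter_true_of_mem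
      intro u hu
      rw [SimpleGraph.mem_neighborFinset] at hu
      rcases hside v hv u hu with h | ⟨h1, _⟩
      · exact h
      · exact absurd h1 hvp
    rw [this, SimpleGraph.card_neighborFinset_eq_degree]
    exact hdeg v
  -- |WF| ≥ 2δ - 1
  have hWcard : 2 * δ ≤ WF.card + 1 := by
    have hne : (nbrW p).Nonempty := by
      rw [← Finset.card_pos]
      have := hnbr1 p hp
      omega
    obtain ⟨a, ha⟩ := hne
    rw [hnbr_mem] at ha
    obtain ⟨hpa, haW⟩ := ha
    set P3 : Finset V := (G.neighborFinset a).erase p with hP3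
    have hP3W : P3 ⊆ WF := by
      intro u hu
      rw [hP3, Finset.mem_erase, SimpleGraph.mem_neighborFinset] at hu
      rcases hside a haW u hu.2 with h | ⟨h1, _⟩
      · exact (hmemWF u).mpr h
      · exact absurd h1 hpa.ne'
    have hP2W : nbrW p ⊆ WF := by
      intro u hu; rw [hnbr_mem] at hu; exact (hmemWF u).mpr hu.2
    have hdisj : ∀ u ∈ nbrW p, u ∉ P3 := by
      intro u hu hu3
      rw [hnbr_mem] at hu
      rw [hP3, Finset.mem_erase, SimpleGraph.mem_neighborFinset] at hu3
      exact no_tri hg hpa hu3.2 hu.1.symm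
    have hpP2 : p ∉ nbrW p := by
      rw [hnbr_mem]; rintro ⟨h, -⟩; exact G.irrefl h
    have hpP3 : p ∉ P3 := by rw [hP3]; exact Finset.notMem_erase p _
    have hsub : insert p (nbrW p ∪ P3) ⊆ WF := by
      intro u hu
      rw [Finset.mem_insert, Finset.mem_union] at hu
      rcases hu with rfl | hu | hu
      · exact (hmemWF u).mpr hp
      · exact hP2W hu
      · exact hP3W hu
    have hcard1 : (nbrW p ∪ P3).card = (nbrW p).card + P3.card := by
      apply Finset.card_union_of_disjoint
      rw [Finset.disjoint_left]
      exact hdisj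
    have hcard2 : (insert p (nbrW p ∪ P3)).card = (nbrW p).card + P3.card + 1 := by
      rw [Finset.card_insert_of_notMem, hcard1]
      rw [Finset.mem_union]
      rintro (h | h)
      · exact hpP2 h
      · exact hpP3 h
    have hle := Finset.card_le_card hsub
    have h2 := hnbr1 p hp
    have h3 : δ ≤ P3.card + 1 := by
      have := card_le_erase_add_one (G.neighborFinset a) p
      have hda : δ ≤ (G.neighborFinset a).card := by
        rw [SimpleGraph.card_neighborFinset_eq_degree]; exact hdeg a
      rw [hP3]; omega
    omega
  -- small case
  by_cases hsmall : (WF \ T).card ≤ 1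
  · have := Finset.card_sdiff_add_card_eq_card hTWF
    omega
  -- main case: at least two vertices outside T
  push_neg at hsmall
  obtain ⟨z1, hz1, z2, hz2, hzne⟩ := Finset.one_lt_card.mp hsmall
  rw [Finset.mem_sdiff, hmemWF] at hz1 hz2
  have hreach : ∀ w ∈ W, ∃ n, w ∈ C n := by
    intro w hw
    exact rforced_rstage G W (↑T) (hforce w hw)
  -- first forced vertex
  have hex1 : ∃ n, ∃ w, w ∈ C n ∧ w ∉ T := by
    obtain ⟨n, hn⟩ := hreach z1 hz1.1
    exact ⟨n, z1, hn, hz1.2⟩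
  obtain ⟨w1, hw1C, hw1T⟩ := Nat.find_spec hex1
  have ht1pos : Nat.find hex1 ≠ 0 := by
    intro h
    rw [h] at hw1C
    simp only [hC, rstage] at hw1C
    exact hw1T hw1C
  obtain ⟨k, hk⟩ : ∃ k, Nat.find hex1 = k + 1 := ⟨Nat.find hex1 - 1, by omega⟩
  have hCk : ∀ u ∈ C k, u ∈ T := by
    intro u hu
    by_contra h
    exact Nat.find_min hex1 (by omega) ⟨u, hu, h⟩
  rw [hk] at hw1C
  have hw1nk : w1 ∉ C k := fun h => hw1T (hCk _ h)
  have hw1C' := hw1C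
  rw [hC, rstage] at hw1C'
  rcases hw1C' with h | ⟨hw1W, v1, hv1W, hadj1, hv1C, hall1⟩
  · exact absurd h hw1nk
  have hv1T : v1 ∈ T := hCk v1 hv1C
  set X : Finset V := (nbrW v1).erase w1 with hX
  have hXT : X ⊆ T := by
    intro u hu
    rw [hX, Finset.mem_erase, hnbr_mem] at hu
    exact hCk u (hall1 u hu.2.1 hu.2.2 hu.1)
  -- second forced vertex
  have hex2 : ∃ n, ∃ w, (w ∈ C n ∧ w ∉ T) ∧ w ≠ w1 := by
    by_cases h : z1 = w1
    · obtain ⟨n, hn⟩ := hreach z2 hz2.1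
      exact ⟨n, z2, ⟨hn, hz2.2⟩, by rw [← h]; exact hzne.symm⟩
    · obtain ⟨n, hn⟩ := hreach z1 hz1.1
      exact ⟨n, z1, ⟨hn, hz1.2⟩, h⟩
  obtain ⟨w2, ⟨hw2C, hw2T⟩, hw2ne⟩ := Nat.find_spec hex2
  have ht2pos : Nat.find hex2 ≠ 0 := by
    intro h
    rw [h] at hw2C
    simp only [hC, rstage] at hw2C
    exact hw2T hw2C
  obtain ⟨k2, hk2⟩ : ∃ k2, Nat.find hex2 = k2 + 1 := ⟨Nat.find hex2 - 1, by omega⟩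
  have hCk2 : ∀ u ∈ C k2, u ∈ T ∨ u = w1 := by
    intro u hu
    by_contra h
    push_neg at h
    exact Nat.find_min hex2 (by omega) ⟨u, ⟨hu, h.1⟩, h.2⟩
  rw [hk2] at hw2C
  have hw2nk : w2 ∉ C k2 := by
    intro h
    rcases hCk2 w2 h with h' | h'
    · exact hw2T h'
    · exact hw2ne h'
  have hw2C' := hw2C
  rw [hC, rstage] at hw2C'
  rcases hw2C' with h | ⟨hw2W, v2, hv2W, hadj2, hv2C, hall2⟩
  · exact absurd h hw2nk
  set Y : Finset V := ((nbrW v2).erase w2).erase w1 with hY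
  have hYT : Y ⊆ T := by
    intro u hu
    rw [hY, Finset.mem_erase, Finset.mem_erase, hnbr_mem] at hu
    rcases hCk2 u (hall2 u hu.2.2.1 hu.2.2.2 hu.2.1) with h | h
    · exact h
    · exact absurd h hu.1
  have hv12 : v1 ≠ v2 := by
    rintro rfl
    exact hw2T (hCk w2 (hall1 w2 hadj2 hw2W hw2ne))
  -- overlap bounds
  have hXN : X ⊆ G.neighborFinset v1 := by
    rw [hX]; exact (Finset.erase_subset _ _).trans (hnbr_sub v1)
  have hYN : Y ⊆ G.neighborFinset v2 := by
    rw [hY]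
    exact ((Finset.erase_subset _ _).trans (Finset.erase_subset _ _)).trans (hnbr_sub v2)
  have hover : (X ∩ Y).card ≤ 1 := by
    rw [Finset.card_le_one]
    intro u hu u' hu'
    rw [Finset.mem_inter] at hu hu'
    by_contra hne
    have h1 : G.Adj v1 u := (SimpleGraph.mem_neighborFinset _ _ _).mp (hXN hu.1)
    have h2 : G.Adj v2 u := (SimpleGraph.mem_neighborFinset _ _ _).mp (hYN hu.2)
    have h3 : G.Adj v1 u' := (SimpleGraph.mem_neighborFinset _ _ _).mp (hXN hu'.1)
    have h4 : G.Adj v2 u' := (SimpleGraph.mem_neighborFinset _ _ _).mp (hYN hu'.2)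
    exact no_c4 hg hv12 hne h1 h2.symm h4 h3.symm
  have hover0 : G.Adj v1 v2 → (X ∩ Y).card = 0 := by
    intro hadj
    rw [Finset.card_eq_zero, Finset.eq_empty_iff_forall_notMem]
    intro u hu
    rw [Finset.mem_inter] at hu
    have h1 : G.Adj v1 u := (SimpleGraph.mem_neighborFinset _ _ _).mp (hXN hu.1)
    have h2 : G.Adj v2 u := (SimpleGraph.mem_neighborFinset _ _ _).mp (hYN hu.2)
    exact no_tri hg hadj h2 h1.symm
  -- basic cards
  have hXc1 : δ ≤ X.card + 2 := by
    have := card_le_erase_add_one (nbrW v1) w1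
    have := hnbr1 v1 hv1W
    rw [hX]; omega
  have hXc2 : v1 ≠ p → δ ≤ X.card + 1 := by
    intro h
    have := card_le_erase_add_one (nbrW v1) w1
    have := hnbr2 v1 hv1W h
    rw [hX]; omega
  have hYc1 : δ ≤ Y.card + 3 := by
    have h1 := card_le_erase_add_one (nbrW v2) w2
    have h2 := card_le_erase_add_one ((nbrW v2).erase w2) w1
    have := hnbr1 v2 hv2W
    rw [hY]; omega
  have hYc2 : v2 ≠ p → δ ≤ Y.card + 2 := by
    intro h
    have h1 := card_le_erase_add_one (nbrW v2) w2
    have h2 := card_le_erase_add_one ((nbrW v2).erase w2) w1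
    have := hnbr2 v2 hv2W h
    rw [hY]; omega
  have hunion : (X ∪ Y).card ≤ T.card :=
    Finset.card_le_card (Finset.union_subset hXT hYT)
  have hcardU : X.card + Y.card = (X ∪ Y).card + (X ∩ Y).card :=
    (Finset.card_union_add_card_inter X Y).symm
  -- insert-p bonus helper
  have hbonus : p ∈ T → p ∉ X → p ∉ Y → (X ∪ Y).card + 1 ≤ T.card := by
    intro hpT hpX hpY
    have hsub : insert p (X ∪ Y) ⊆ T :=
      Finset.insert_subset hpT (Finset.union_subset hXT hYT)
    have := Finset.card_le_card hsub
    rwa [Finset.card_insert_of_notMem (by rw [Finset.mem_union]; tauto)] at this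
  -- case analysis
  by_cases hv1p : v1 = p
  · have hpT : p ∈ T := hv1p ▸ hv1T
    have hv2p : v2 ≠ p := fun h => hv12 (hv1p.trans h.symm)
    by_cases hadjp : G.Adj v2 p
    · have h0 : (X ∩ Y).card = 0 := hover0 (by rw [hv1p]; exact hadjp.symm)
      have := hYc2 hv2p
      omega
    · have hpX : p ∉ X := by
        intro h
        have := (SimpleGraph.mem_neighborFinset _ _ _).mp (hXN h)
        rw [hv1p] at this
        exact G.irrefl this
      have hpY : p ∉ Y := fun h =>
        hadjp ((SimpleGraph.mem_neighborFinset _ _ _).mp (hYN h))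
      have := hbonus hpT hpX hpY
      have := hYc2 hv2p
      omega
  · by_cases hv2p : v2 = p
    · rcases hCk2 v2 hv2C with hpT | hpw1
      · by_cases hadjp : G.Adj v1 p
        · have h0 : (X ∩ Y).card = 0 := hover0 (by rw [hv2p]; exact hadjp)
          have := hXc2 hv1p
          omega
        · have hpX : p ∉ X := fun h =>
            hadjp ((SimpleGraph.mem_neighborFinset _ _ _).mp (hXN h))
          have hpY : p ∉ Y := by
            intro h
            have := (SimpleGraph.mem_neighborFinset _ _ _).mp (hYN h)
            rw [hv2p] at this
            exact G.irrefl this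
          have := hbonus (hv2p ▸ hpT) hpX hpY
          have := hXc2 hv1p
          omega
      · -- v2 = p = w1
        have hadj12 : G.Adj v1 v2 := hpw1 ▸ hadj1
        have h0 : (X ∩ Y).card = 0 := hover0 hadj12
        have hYc : δ ≤ Y.card + 2 := by
          have h1 := card_le_erase_add_one (nbrW v2) w2
          have h2 : ((nbrW v2).erase w2).erase w1 = (nbrW v2).erase w2 := by
            apply Finset.erase_eq_of_notMem
            rw [Finset.mem_erase, hnbr_mem]
            rintro ⟨-, hadj, -⟩
            rw [← hpw1] at hadj
            exact G.irrefl (hv2p ▸ hadj : G.Adj p p) |>.elim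
          have := hnbr1 v2 hv2W
          rw [hY, h2]; omega
        have := hXc2 hv1p
        omega
    · have := hXc2 hv1p
      have := hYc2 hv2p
      omega

end ZFAux

/-- `δ ≥ 3`, girth at least 5, and a cut edge imply `Z(G) ≥ 4δ − 9`. -/
theorem zf_cut_edge {V : Type*} [Fintype V] (G : SimpleGraph V) [DecidableRel G.Adj]
    (hδ : 3 ≤ G.minDegree) (hg : 5 ≤ G.egirth) (e : Sym2 V) (he : G.IsBridge e) :
    4 * G.minDegree - 9 ≤ G.zeroForcingNumber := by
  classical
  revert he
  induction e using Sym2.ind with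
  | _ x y =>
  intro he
  rw [SimpleGraph.isBridge_iff] at he
  have hnr := he
  set δ := G.minDegree with hδdef
  have hdeg : ∀ v, δ ≤ G.degree v := fun v => G.minDegree_le_degree v
  -- extract a minimum zero forcing set
  have hne : {k | ∃ S : Finset V, G.IsZeroForcingSet ↑S ∧ S.card = k}.Nonempty := by
    refine ⟨(Finset.univ : Finset V).card, Finset.univ, ?_, rfl⟩
    intro v
    exact SimpleGraph.Forced.init (by simp)
  obtain ⟨S, hS, hScard⟩ := Nat.sInf_mem hne
  rw [SimpleGraph.zeroForcingNumber, ← hScard]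
  -- the two sides
  set G' := G \ SimpleGraph.fromEdgeSet {s(x, y)} with hG'
  set A : Set V := {v | G'.Reachable x v} with hA
  set B : Set V := {v | G'.Reachable y v} with hB
  have hxA : x ∈ A := SimpleGraph.Reachable.refl x
  have hyB : y ∈ B := SimpleGraph.Reachable.refl y
  have hAB : ∀ v, v ∈ A → v ∈ B → False := by
    intro v hvA hvB
    exact hnr (hvA.trans hvB.symm)
  have hyA : y ∉ A := fun h => hAB y h hyB
  have hxB : x ∉ B := fun h => hAB x hxA h
  have hsideA : ∀ a ∈ A, ∀ u, G.Adj a u → u ∈ A ∨ (a = x ∧ u = y) := by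
    intro a ha u hadj
    by_cases h : G'.Adj a u
    · exact Or.inl (ha.trans h.reachable)
    · rw [hG', SimpleGraph.sdiff_adj] at h
      push_neg at h
      have h2 := h hadj
      rw [SimpleGraph.fromEdgeSet_adj, Set.mem_singleton_iff, Sym2.eq_iff] at h2
      rcases h2.1 with ⟨h3, h4⟩ | ⟨h3, h4⟩
      · exact Or.inr ⟨h3, h4⟩
      · exact absurd (h3 ▸ ha) hyA
  have hsideB : ∀ a ∈ B, ∀ u, G.Adj a u → u ∈ B ∨ (a = y ∧ u = x) := by
    intro a ha u hadj
    by_cases h : G'.Adj a u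
    · exact Or.inl (ha.trans h.reachable)
    · rw [hG', SimpleGraph.sdiff_adj] at h
      push_neg at h
      have h2 := h hadj
      rw [SimpleGraph.fromEdgeSet_adj, Set.mem_singleton_iff, Sym2.eq_iff] at h2
      rcases h2.1 with ⟨h3, h4⟩ | ⟨h3, h4⟩
      · exact absurd (h3 ▸ ha) hxB
      · exact Or.inr ⟨h3, h4⟩
  -- split S
  set TA : Finset V := S.filter (· ∈ A) with hTA
  set TB : Finset V := S.filter (· ∈ B) with hTB
  have hTAB : TA.card + TB.card ≤ S.card := by
    have hdisj : Disjoint TA TB := by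
      rw [Finset.disjoint_left]
      intro u hu hu'
      rw [hTA, Finset.mem_filter] at hu
      rw [hTB, Finset.mem_filter] at hu'
      exact hAB u hu.2 hu'.2
    have hsub : TA ∪ TB ⊆ S := by
      apply Finset.union_subset <;> exact Finset.filter_subset _ _
    have := Finset.card_le_card hsub
    rwa [Finset.card_union_of_disjoint hdisj] at this
  have hTAsub : (↑TA : Set V) ⊆ A := by
    intro u hu
    rw [hTA] at hu
    simp only [Finset.coe_filter, Set.mem_setOf_eq] at hu
    exact hu.2
  have hTBsub : (↑TB : Set V) ⊆ B := by
    intro u hu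
    rw [hTB] at hu
    simp only [Finset.coe_filter, Set.mem_setOf_eq] at hu
    exact hu.2
  have hTAcoe : (↑TA : Set V) = ↑S ∩ A := by
    ext u; simp [hTA]
  have hTBcoe : (↑TB : Set V) = ↑S ∩ B := by
    ext u; simp [hTB]
  -- forcing on each side
  have hbadA : ∀ w ∈ A, ZFAux.RForced G A (↑(insert x TA)) w := by
    intro w hw
    have := ZFAux.forced_side hsideA (hS w) hw
    have hcoe : ((↑S : Set V) ∩ A) ∪ {x} = (↑(insert x TA) : Set V) := by
      rw [Finset.coe_insert, hTAcoe, Set.union_singleton]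
    rwa [hcoe] at this
  have hbadB : ∀ w ∈ B, ZFAux.RForced G B (↑(insert y TB)) w := by
    intro w hw
    have := ZFAux.forced_side hsideB (hS w) hw
    have hcoe : ((↑S : Set V) ∩ B) ∪ {y} = (↑(insert y TB) : Set V) := by
      rw [Finset.coe_insert, hTBcoe, Set.union_singleton]
    rwa [hcoe] at this
  -- which side is "good"
  have hreach : ∀ v : V, ∃ n, v ∈ ZFAux.rstage G Set.univ (↑S) n := by
    intro v
    exact ZFAux.rforced_rstage G Set.univ (↑S) (ZFAux.forced_runiv (hS v))
  rcases ZFAux.gc_or G (↑S) x y with hgc | hgc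
  · -- A good, B bad
    have hgoodA : ∀ w ∈ A, ZFAux.RForced G A (↑TA) w := by
      intro w hw
      obtain ⟨n, hn⟩ := hreach w
      have := ZFAux.good_side hsideA hgc n w hn hw
      rwa [← hTAcoe] at this
    have hAcount := ZFAux.count_main hg hδ hdeg hxA hsideA TA hTAsub hgoodA
    have hBcount := ZFAux.count_main hg hδ hdeg hyB hsideB (insert y TB)
      (by rw [Finset.coe_insert]; exact Set.insert_subset hyB hTBsub) hbadB
    have hBins : (insert y TB).card ≤ TB.card + 1 := Finset.card_insert_le y TB
    omega
  · -- B good, A bad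
    have hgoodB : ∀ w ∈ B, ZFAux.RForced G B (↑TB) w := by
      intro w hw
      obtain ⟨n, hn⟩ := hreach w
      have := ZFAux.good_side hsideB hgc n w hn hw
      rwa [← hTBcoe] at this
    have hBcount := ZFAux.count_main hg hδ hdeg hyB hsideB TB hTBsub hgoodB
    have hAcount := ZFAux.count_main hg hδ hdeg hxA hsideA (insert x TA)
      (by rw [Finset.coe_insert]; exact Set.insert_subset hxA hTAsub) hbadA
    have hAins : (insert x TA).card ≤ TA.card + 1 := Finset.card_insert_le x TA
    omega
end

section
/- For any graph G on n vertices, Z(G) ≥ n − mr(G), where mr(G) is the minimum rank of G. -/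
lemma forced_vanish {V : Type*} [Fintype V] [DecidableEq V] (G : SimpleGraph V)
    (M : Matrix V V ℝ)
    (hpat : ∀ i j, i ≠ j → (M i j ≠ 0 ↔ G.Adj i j))
    (S : Set V) (x : V → ℝ) (hx : M.mulVec x = 0) (hS : ∀ s ∈ S, x s = 0)
    {v : V} (h : G.Forced S v) : x v = 0 := by
  induction h with
  | init hv => exact hS _ hv
  | @force v w hadj hv hothers ihv ihothers =>
    have hMv : M.mulVec x v = 0 := congrFun hx v
    rw [Matrix.mulVec, dotProduct] at hMv
    have hzero : ∀ u ∈ Finset.univ, u ≠ w → M v u * x u = 0 := by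
      intro u _ hu
      by_cases huv : u = v
      · subst huv; rw [ihv]; ring
      · by_cases hadj' : G.Adj v u
        · rw [ihothers u hadj' hu]; ring
        · have : M v u = 0 := by
            by_contra h0
            exact hadj' ((hpat v u (Ne.symm huv)).mp h0)
          rw [this]; ring
    have hsum : ∑ u, M v u * x u = M v w * x w :=
      Finset.sum_eq_single w (fun u h1 h2 => hzero u h1 h2) (by simp)
    have hMw : M v w ≠ 0 := (hpat v w hadj.ne).mpr hadj
    have := hsum.symm.trans hMv
    exact (mul_eq_zero.mp this).resolve_left hMw

/-- `Z(G) ≥ n − mr(G)`: for every real symmetric matrix with the off-diagonal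
pattern of `G`, `n − rank M ≤ Z(G)`. -/
theorem zf_ge_card_sub_minRank {V : Type*} [Fintype V] [DecidableEq V] (G : SimpleGraph V)
    (M : Matrix V V ℝ) (hsym : M.IsSymm)
    (hpat : ∀ i j, i ≠ j → (M i j ≠ 0 ↔ G.Adj i j)) :
    Fintype.card V - M.rank ≤ G.zeroForcingNumber := by
  have hne : (G.zeroForcingNumber) ∈ {k | ∃ S : Finset V, G.IsZeroForcingSet ↑S ∧ S.card = k} := by
    apply Nat.sInf_mem
    exact ⟨Fintype.card V, Finset.univ, fun v => SimpleGraph.Forced.init (by simp), by simp⟩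
  obtain ⟨S, hS, hcard⟩ := hne
  -- restriction map from kernel to functions on S is injective
  have hnull : Module.finrank ℝ (LinearMap.ker M.mulVecLin) ≤ S.card := by
    have hinj : Function.Injective
        ((LinearMap.funLeft ℝ ℝ (Subtype.val : {v // v ∈ S} → V)).comp
          (LinearMap.ker M.mulVecLin).subtype) := by
      intro x y hxy
      have hdiff : M.mulVec (x.1 - y.1) = 0 := by
        have hx := x.2; have hy := y.2
        simp only [LinearMap.mem_ker, Matrix.mulVecLin_apply] at hx hy
        rw [Matrix.mulVec_sub, hx, hy, sub_zero]
      have hvanish : ∀ s ∈ (S : Set V), (x.1 - y.1) s = 0 := by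
        intro s hs
        have := congrFun hxy ⟨s, by simpa using hs⟩
        simpa [LinearMap.funLeft, sub_eq_zero] using this
      have : ∀ v, (x.1 - y.1) v = 0 := fun v =>
        forced_vanish G M hpat _ _ hdiff hvanish (hS v)
      have : x.1 = y.1 := by
        funext v; have := this v; simpa [sub_eq_zero] using this
      exact Subtype.ext this
    calc Module.finrank ℝ (LinearMap.ker M.mulVecLin)
        ≤ Module.finrank ℝ ({v // v ∈ S} → ℝ) :=
          LinearMap.finrank_le_finrank_of_injective hinj
      _ = S.card := by simp [Module.finrank_fintype_fun_eq_card]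
  have hrn : M.rank + Module.finrank ℝ (LinearMap.ker M.mulVecLin) = Fintype.card V := by
    have := LinearMap.finrank_range_add_finrank_ker M.mulVecLin
    simpa [Matrix.rank, Module.finrank_fintype_fun_eq_card] using this
  omega
end
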